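/- arXiv:1902.08468 — 9 statements merged into one kernel-verified Lean document; each statement's English description precedes it below -/
import Mathlib

section
/- Every ABAB-free hypergraph is proper 3-colorable: its vertices can be colored with 3 colors so that no hyperedge of size at least 2 is monochromatic. -/
/-- An `ABAB`-sequence for two hyperedges `A`, `B` with respect to a strict order `lt`. -/
def ABABseq {V : Type*} (lt : V → V → Prop) (A B : Set V) : Prop :=
  ∃ a1 b1 a2 b2 : V, lt a1 b1 ∧ lt b1 a2 ∧ lt a2 b2 ∧
    a1 ∈ A \ B ∧ a2 ∈ A \ B ∧ b1 ∈ B \ A ∧ b2 ∈ B \ A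

/-- A hypergraph (edge set `E`) is ABAB-free with respect to the order `lt`. -/
def ABABFree {V : Type*} (lt : V → V → Prop) (E : Set (Set V)) : Prop :=
  ∀ A ∈ E, ∀ B ∈ E, ¬ ABABseq lt A B

/-!
Fix a finite vertex set `W` and join `x ≠ y` whenever some hyperedge meets `W` in exactly `{x, y}`.
ABAB-freeness forbids two such edges from crossing in the vertex order, and a non-crossing graph has
a vertex of degree at most two: a vertex of degree at least three has two neighbours `p < q` on the
same side of it, the edge to `q` spans a strictly smaller interval containing `p`, and no vertex
inside that interval has a neighbour outside it, so we may recurse. Colour `W` minus such a vertex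
`v` inductively and give `v` a colour missed by its at most two neighbours: a hyperedge meeting `W`
in at least two vertices but `W \ {v}` in at most one meets `W` in `{v, x}` for a neighbour `x`.
-/

open Finset

lemma Set.exists_eq_pair_of_subsingleton_sdiff {α : Type*} {s : Set α} {v : α}
    (hs : s.Nontrivial) (h : (s \ {v}).Subsingleton) : ∃ x, x ≠ v ∧ s = {v, x} := by
  obtain ⟨x, hxs, hxv⟩ := hs.exists_ne v
  have hvs : v ∈ s := by
    by_contra hvs
    exact hs.not_subsingleton (by rwa [Set.sdiff_singleton_eq_self hvs] at h)
  refine ⟨x, hxv, ?_⟩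
  calc s = insert v s := (Set.insert_eq_of_mem hvs).symm
    _ = insert v (s \ {v}) := Set.insert_sdiff_singleton.symm
    _ = {v, x} := by rw [h.eq_singleton_of_mem ⟨hxs, hxv⟩]

def traceGraph {V : Type*} (E : Set (Set V)) (W : Set V) : SimpleGraph V where
  Adj x y := x ≠ y ∧ ∃ A ∈ E, A ∩ W = {x, y}
  symm := ⟨fun x y ⟨hxy, A, hA, hAW⟩ => ⟨hxy.symm, A, hA, hAW.trans (Set.pair_comm x y)⟩⟩
  loopless := ⟨fun _ h => h.1 rfl⟩

@[simp]
lemma traceGraph_adj {V : Type*} {E : Set (Set V)} {W : Set V} {x y : V} :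
    (traceGraph E W).Adj x y ↔ x ≠ y ∧ ∃ A ∈ E, A ∩ W = {x, y} :=
  Iff.rfl

lemma mem_sdiff_of_inter_eq_pair {V : Type*} {A B W : Set V} {a b c d x : V}
    (hA : A ∩ W = {a, c}) (hB : B ∩ W = {b, d}) (hx : x = a ∨ x = c) (hxb : x ≠ b)
    (hxd : x ≠ d) : x ∈ A \ B := by
  have hxA : x ∈ A ∩ W := by rw [hA]; exact hx
  refine ⟨hxA.1, fun hxB => ?_⟩
  have hxB' : x ∈ B ∩ W := ⟨hxB, hxA.2⟩
  rw [hB] at hxB'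
  rcases hxB' with h | h
  exacts [hxb h, hxd h]

section LinearOrder

variable {V : Type*} [LinearOrder V]

lemma Finset.exists_lt_lt_or_lt_lt_of_two_lt_card {s : Finset V} {v : V} (hv : v ∉ s)
    (hs : 2 < #s) : ∃ p ∈ s, ∃ q ∈ s, (v < p ∧ p < q) ∨ (q < p ∧ p < v) := by
  have hsplit := card_filter_add_card_filter_not (s := s) (v < ·)
  by_cases hup : 1 < #{x ∈ s | v < x}
  · obtain ⟨p, hp, q, hq, hpq⟩ := one_lt_card.1 hup
    simp only [mem_filter] at hp hq
    rcases hpq.lt_or_gt with h | h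
    · exact ⟨p, hp.1, q, hq.1, Or.inl ⟨hp.2, h⟩⟩
    · exact ⟨q, hq.1, p, hp.1, Or.inl ⟨hq.2, h⟩⟩
  · obtain ⟨p, hp, q, hq, hpq⟩ := one_lt_card.1 (show 1 < #{x ∈ s | ¬v < x} by omega)
    simp only [mem_filter, not_lt] at hp hq
    have hpv : p < v := hp.2.lt_of_ne (ne_of_mem_of_not_mem hp.1 hv)
    have hqv : q < v := hq.2.lt_of_ne (ne_of_mem_of_not_mem hq.1 hv)
    rcases hpq.lt_or_gt with h | h
    · exact ⟨q, hq.1, p, hp.1, Or.inr ⟨h, hqv⟩⟩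
    · exact ⟨p, hp.1, q, hq.1, Or.inr ⟨h, hpv⟩⟩

namespace SimpleGraph

def IsNonCrossing (G : SimpleGraph V) : Prop :=
  ∀ ⦃a b c d : V⦄, a < b → b < c → c < d → G.Adj a c → ¬G.Adj b d

variable {G : SimpleGraph V}

lemma IsNonCrossing.mem_Icc_of_adj (hG : G.IsNonCrossing) {a c v x : V} (hac : G.Adj a c)
    (hav : a < v) (hvc : v < c) (hvx : G.Adj v x) : x ∈ Set.Icc a c := by
  constructor
  · by_contra! hxa
    exact hG hxa hav hvc hvx.symm hac
  · by_contra! hcx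
    exact hG hav hvc hcx hac hvx

variable [DecidableRel G.Adj]

lemma exists_adj_lt_lt_of_two_lt_degree {W : Finset V} {v : V}
    (hv : 2 < #{x ∈ W | G.Adj v x}) :
    ∃ a c, G.Adj a c ∧ (a = v ∨ c = v) ∧ ∃ p ∈ W, a < p ∧ p < c := by
  obtain ⟨p, hp, q, hq, hside⟩ :=
    exists_lt_lt_or_lt_lt_of_two_lt_card (s := {x ∈ W | G.Adj v x}) (v := v) (by simp) hv
  simp only [mem_filter] at hp hq
  rcases hside with ⟨hvp, hpq⟩ | ⟨hqp, hpv⟩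
  · exact ⟨v, q, hq.2, Or.inl rfl, p, hp.1, hvp, hpq⟩
  · exact ⟨q, v, hq.2.symm, Or.inr rfl, p, hp.1, hqp, hpv⟩

lemma IsNonCrossing.exists_degree_le_two_of_adj (hG : G.IsNonCrossing) (W : Finset V)
    {a c p : V} (hac : G.Adj a c) (hpW : p ∈ W) (hap : a < p) (hpc : p < c) :
    ∃ v ∈ W, #{x ∈ W | G.Adj v x} ≤ 2 := by
  induction hn : #{x ∈ W | a < x ∧ x < c} using Nat.strong_induction_on generalizing a c p with
  | _ n ih =>
  by_cases hp : #{x ∈ W | G.Adj p x} ≤ 2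
  · exact ⟨p, hpW, hp⟩
  obtain ⟨a', c', hac', hpa'c', q, hqW, ha'q, hqc'⟩ :=
    exists_adj_lt_lt_of_two_lt_degree (not_le.1 hp)
  have hnested : a ≤ a' ∧ c' ≤ c := by
    rcases hpa'c' with rfl | rfl
    · exact ⟨hap.le, (hG.mem_Icc_of_adj hac hap hpc hac').2⟩
    · exact ⟨(hG.mem_Icc_of_adj hac hap hpc hac'.symm).1, hpc.le⟩
  have hshrink : #{x ∈ W | a' < x ∧ x < c'} < #{x ∈ W | a < x ∧ x < c} := by
    have hsub : {x ∈ W | a' < x ∧ x < c'} ⊆ {x ∈ W | a < x ∧ x < c} := by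
      intro x
      simp only [mem_filter]
      exact fun ⟨hxW, ha'x, hxc'⟩ => ⟨hxW, hnested.1.trans_lt ha'x, hxc'.trans_le hnested.2⟩
    refine card_lt_card ((ssubset_iff_of_subset hsub).2 ⟨p, ?_, ?_⟩)
    · simp [hpW, hap, hpc]
    · rcases hpa'c' with rfl | rfl <;> simp
  exact ih _ (hn ▸ hshrink) hac' hqW ha'q hqc' rfl

lemma IsNonCrossing.exists_degree_le_two (hG : G.IsNonCrossing) {W : Finset V}
    (hW : W.Nonempty) : ∃ v ∈ W, #{x ∈ W | G.Adj v x} ≤ 2 := by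
  obtain ⟨v, hv⟩ := hW
  by_cases hdeg : #{x ∈ W | G.Adj v x} ≤ 2
  · exact ⟨v, hv, hdeg⟩
  obtain ⟨a, c, hac, -, p, hpW, hap, hpc⟩ := exists_adj_lt_lt_of_two_lt_degree (not_le.1 hdeg)
  exact hG.exists_degree_le_two_of_adj W hac hpW hap hpc

end SimpleGraph

variable {E : Set (Set V)}

lemma ABABFree.isNonCrossing_traceGraph (hE : ABABFree (· < ·) E) (W : Set V) :
    (traceGraph E W).IsNonCrossing := by
  intro a b c d hab hbc hcd hac hbd
  obtain ⟨-, A, hA, hAW⟩ := traceGraph_adj.1 hac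
  obtain ⟨-, B, hB, hBW⟩ := traceGraph_adj.1 hbd
  have had : a < d := hab.trans (hbc.trans hcd)
  exact hE A hA B hB ⟨a, b, c, d, hab, hbc, hcd,
    mem_sdiff_of_inter_eq_pair hAW hBW (.inl rfl) hab.ne had.ne,
    mem_sdiff_of_inter_eq_pair hAW hBW (.inr rfl) hbc.ne' hcd.ne,
    mem_sdiff_of_inter_eq_pair hBW hAW (.inl rfl) hab.ne' hbc.ne,
    mem_sdiff_of_inter_eq_pair hBW hAW (.inr rfl) had.ne' hcd.ne'⟩

theorem ABABFree.exists_fin_three_coloring_on (hE : ABABFree (· < ·) E)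
    (W : Finset V) : ∃ c : V → Fin 3, ∀ A ∈ E, (A ∩ W).Nontrivial →
      ∃ x ∈ A ∩ W, ∃ y ∈ A ∩ W, c x ≠ c y := by
  classical
  induction W using Finset.strongInduction with
  | H W ih =>
  rcases W.eq_empty_or_nonempty with rfl | hW
  · exact ⟨0, fun A _ hA => by simp at hA⟩
  obtain ⟨v, hvW, hv⟩ := (hE.isNonCrossing_traceGraph W).exists_degree_le_two hW
  obtain ⟨c, hc⟩ := ih (W.erase v) (erase_ssubset hvW)
  rw [coe_erase] at hc
  obtain ⟨γ, -, hγ⟩ := exists_mem_notMem_of_card_lt_card (t := univ)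
    ((card_image_le.trans hv).trans_lt (by simp) :
      #(image c {x ∈ W | (traceGraph E W).Adj v x}) < #(univ : Finset (Fin 3)))
  refine ⟨Function.update c v γ, fun A hA hAW => ?_⟩
  by_cases hAv : ((A ∩ W) \ {v}).Nontrivial
  · rw [Set.inter_sdiff_assoc] at hAv
    obtain ⟨x, hx, y, hy, hxy⟩ := hc A hA hAv
    refine ⟨x, ⟨hx.1, hx.2.1⟩, y, ⟨hy.1, hy.2.1⟩, ?_⟩
    rwa [Function.update_of_ne hx.2.2, Function.update_of_ne hy.2.2]
  obtain ⟨x, hxv, hAx⟩ :=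
    Set.exists_eq_pair_of_subsingleton_sdiff hAW (Set.not_nontrivial_iff.1 hAv)
  have hxW : x ∈ A ∩ W := by rw [hAx]; exact .inr rfl
  have hadj : (traceGraph E W).Adj v x := traceGraph_adj.2 ⟨hxv.symm, A, hA, hAx⟩
  refine ⟨v, by rw [hAx]; exact .inl rfl, x, hxW, ?_⟩
  rw [Function.update_self, Function.update_of_ne hxv]
  exact fun h => hγ (h ▸ mem_image_of_mem c (mem_filter.2 ⟨hxW.2, hadj⟩))

end LinearOrder

/-- Every ABAB-free hypergraph is proper 3-colorable: there is a coloring of the vertices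
with 3 colors such that no hyperedge of size at least 2 is monochromatic. -/
theorem stmt0 {V : Type*} [Fintype V] (E : Set (Set V))
    (h : ∃ ord : LinearOrder V, ABABFree ord.lt E) :
    ∃ c : V → Fin 3, ∀ A ∈ E, 2 ≤ A.ncard →
      ∃ x ∈ A, ∃ y ∈ A, c x ≠ c y := by
  obtain ⟨ord, hE⟩ := h
  obtain ⟨c, hc⟩ := hE.exists_fin_three_coloring_on Finset.univ
  refine ⟨c, fun A hA hA2 => ?_⟩
  simpa using hc A hA (by simpa using Set.one_lt_ncard_iff_nontrivial.1 hA2)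
end

section
/- In a finite ABAB-free hypergraph (with a fixed witnessing vertex order), every hyperedge contains a pair of vertices {p,q} such that adding the hyperedge {p,q} to the hypergraph keeps it ABAB-free. -/
/-- `B` splits the pair `p < q`. -/
def SplitPair {V : Type*} [LinearOrder V] (B : Set V) (p q : V) : Prop :=
  p ∉ B ∧ q ∉ B ∧ (∃ b ∈ B, p < b ∧ b < q) ∧ ∃ c ∈ B, c < p ∨ q < c

/-- `p < q` are consecutive elements of `A`. -/
def GapPair {V : Type*} [LinearOrder V] (A : Set V) (p q : V) : Prop :=
  p ∈ A ∧ q ∈ A ∧ p < q ∧ ∀ a ∈ A, ¬(p < a ∧ a < q)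

lemma exists_greatest_aux {V : Type*} [Fintype V] [LinearOrder V] {s : Set V}
    (h : s.Nonempty) : ∃ m ∈ s, ∀ x ∈ s, x ≤ m := by
  obtain ⟨m, hm, hmax⟩ := Set.Finite.exists_maximalFor id s s.toFinite h
  refine ⟨m, hm, fun x hx => ?_⟩
  rcases le_total x m with h' | h'
  · exact h'
  · exact (hmax hx h').ge

lemma exists_least_aux {V : Type*} [Fintype V] [LinearOrder V] {s : Set V}
    (h : s.Nonempty) : ∃ m ∈ s, ∀ x ∈ s, m ≤ x := by
  obtain ⟨m, hm, hmin⟩ := Set.Finite.exists_minimalFor id s s.toFinite h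
  refine ⟨m, hm, fun x hx => ?_⟩
  rcases le_total m x with h' | h'
  · exact h'
  · exact hmin hx h'

lemma gap_below_aux {V : Type*} [Fintype V] [LinearOrder V] {A : Set V} {x y : V}
    (hx : x ∈ A) (hy : y ∈ A) (hxy : x < y) : ∃ p, GapPair A p y ∧ x ≤ p := by
  obtain ⟨p, hp, hpmax⟩ := exists_greatest_aux (s := {a ∈ A | a < y}) ⟨x, hx, hxy⟩
  refine ⟨p, ⟨hp.1, hy, hp.2, fun a ha hcon => ?_⟩, hpmax x ⟨hx, hxy⟩⟩
  exact absurd (hpmax a ⟨ha, hcon.2⟩) (not_le.2 hcon.1)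

lemma gap_above_aux {V : Type*} [Fintype V] [LinearOrder V] {A : Set V} {x y : V}
    (hx : x ∈ A) (hy : y ∈ A) (hxy : x < y) : ∃ q, GapPair A x q ∧ q ≤ y := by
  obtain ⟨q, hq, hqmin⟩ := exists_least_aux (s := {a ∈ A | x < a}) ⟨y, hy, hxy⟩
  refine ⟨q, ⟨hx, hq.1, hq.2, fun a ha hcon => ?_⟩, hqmin y ⟨hy, hxy⟩⟩
  exact absurd (hqmin a ⟨ha, hcon.1⟩) (not_le.2 hcon.2)

/-- Localization: all elements of a splitter outside `A` lie strictly between `p` and `q`. -/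
lemma splitter_loc {V : Type*} [Fintype V] [LinearOrder V] {E : Set (Set V)}
    (hfree : ABABFree (· < ·) E) {A B : Set V} (hA : A ∈ E) (hB : B ∈ E) {p q : V}
    (hg : GapPair A p q) (hs : SplitPair B p q) :
    ∀ d ∈ B, d ∉ A → p < d ∧ d < q := by
  obtain ⟨hpA, hqA, hpq, hgk⟩ := hg
  obtain ⟨hpB, hqB, ⟨b, hbB, hpb, hbq⟩, -⟩ := hs
  have hbA : b ∉ A := fun h => hgk b h ⟨hpb, hbq⟩
  intro d hdB hdA
  constructor
  · by_contra hnd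
    have hdp : d < p := lt_of_le_of_ne (not_lt.1 hnd) (fun h => hpB (by rw [← h]; exact hdB))
    exact hfree B hB A hA ⟨d, p, b, q, hdp, hpb, hbq,
      ⟨hdB, hdA⟩, ⟨hbB, hbA⟩, ⟨hpA, hpB⟩, ⟨hqA, hqB⟩⟩
  · by_contra hnd
    have hqd : q < d := lt_of_le_of_ne (not_lt.1 hnd) (fun h => hqB (by rw [h]; exact hdB))
    exact hfree A hA B hB ⟨p, b, q, d, hpb, hbq, hqd,
      ⟨hpA, hpB⟩, ⟨hqA, hqB⟩, ⟨hbB, hbA⟩, ⟨hdB, hdA⟩⟩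

/-- Key lemma: some consecutive pair of `A` is unsplittable. -/
lemma exists_unsplittable_gap {V : Type*} [Fintype V] [LinearOrder V] (E : Set (Set V))
    (hfree : ABABFree (· < ·) E) {A : Set V} (hA : A ∈ E) (h2 : 2 ≤ A.ncard) :
    ∃ p q, GapPair A p q ∧ ∀ B ∈ E, ¬ SplitPair B p q := by
  by_contra hne
  have h : ∀ p q, GapPair A p q → ∃ B, B ∈ E ∧ SplitPair B p q := by
    intro p q hg
    by_contra h2'
    exact hne ⟨p, q, hg, fun B hB hs => h2' ⟨B, hB, hs⟩⟩
  -- the set of maxima of splitters of gaps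
  set F : Set V :=
    {m | ∃ B p q, B ∈ E ∧ GapPair A p q ∧ SplitPair B p q ∧ m ∈ B ∧ ∀ x ∈ B, x ≤ m} with hF
  have hFne : F.Nonempty := by
    have h1 : 1 < A.ncard := h2
    obtain ⟨x, hx, y, hy, hxy⟩ := (Set.one_lt_ncard A.toFinite).1 h1
    rcases hxy.lt_or_gt with hlt | hlt
    · obtain ⟨p₀, hg₀, -⟩ := gap_below_aux hx hy hlt
      obtain ⟨B₀, hB₀, hs₀⟩ := h p₀ y hg₀
      obtain ⟨b₀, hb₀, -, -⟩ := hs₀.2.2.1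
      obtain ⟨m, hmB, hmax⟩ := exists_greatest_aux ⟨b₀, hb₀⟩
      exact ⟨m, B₀, p₀, y, hB₀, hg₀, hs₀, hmB, hmax⟩
    · obtain ⟨p₀, hg₀, -⟩ := gap_below_aux hy hx hlt
      obtain ⟨B₀, hB₀, hs₀⟩ := h p₀ x hg₀
      obtain ⟨b₀, hb₀, -, -⟩ := hs₀.2.2.1
      obtain ⟨m, hmB, hmax⟩ := exists_greatest_aux ⟨b₀, hb₀⟩
      exact ⟨m, B₀, p₀, x, hB₀, hg₀, hs₀, hmB, hmax⟩
  obtain ⟨m₀, hm₀F, hm₀min⟩ := exists_least_aux hFne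
  obtain ⟨B, p, q, hBE, hg, hs, hm₀B, hm₀max⟩ := hm₀F
  have hpq : p < q := hg.2.2.1
  obtain ⟨b, hbB, hpb, hbq⟩ := hs.2.2.1
  obtain ⟨c, hcB, hcor⟩ := hs.2.2.2
  have hbA : b ∉ A := fun hb => hg.2.2.2 b hb ⟨hpb, hbq⟩
  have hloc := splitter_loc hfree hA hBE hg hs
  by_cases hup : ∃ c', c' ∈ A ∧ c' ∈ B ∧ q < c'
  · -- Case 1: B reaches an element of A above q
    obtain ⟨c', hc'A, hc'B, hqc'⟩ := hup
    have hqm₀ : q < m₀ := lt_of_lt_of_le hqc' (hm₀max c' hc'B)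
    have hm₀A : m₀ ∈ A := by
      by_contra hno
      exact absurd (hloc m₀ hm₀B hno).2 (not_lt.2 hqm₀.le)
    obtain ⟨p', hg', hqp'⟩ := gap_below_aux hg.2.1 hm₀A hqm₀
    obtain ⟨B', hB'E, hs'⟩ := h p' m₀ hg'
    obtain ⟨b', hb'B', hp'b', hb'm₀⟩ := hs'.2.2.1
    have hb'A : b' ∉ A := fun hb => hg'.2.2.2 b' hb ⟨hp'b', hb'm₀⟩
    obtain ⟨m₁, hm₁B', hm₁max⟩ := exists_greatest_aux ⟨b', hb'B'⟩
    have hm₁F : m₁ ∈ F := ⟨B', p', m₀, hB'E, hg', hs', hm₁B', hm₁max⟩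
    have hm₀m₁ : m₀ < m₁ :=
      lt_of_le_of_ne (hm₀min m₁ hm₁F) (fun h' => hs'.2.1 (by rw [h']; exact hm₁B'))
    have hbB' : b ∉ B' := fun hmem =>
      absurd ((splitter_loc hfree hA hB'E hg' hs' b hmem hbA).1) (not_lt.2 (hbq.le.trans hqp'))
    have hb'B : b' ∉ B := fun hmem =>
      absurd ((hloc b' hmem hb'A).2) (lt_of_le_of_lt hqp' hp'b').asymm
    have hm₁B : m₁ ∉ B := fun hmem => absurd (hm₀max m₁ hmem) (not_le.2 hm₀m₁)
    exact hfree B hBE B' hB'E ⟨b, b', m₀, m₁,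
      lt_of_lt_of_le hbq (hqp'.trans hp'b'.le), hb'm₀, hm₀m₁,
      ⟨hbB, hbB'⟩, ⟨hm₀B, hs'.2.1⟩, ⟨hb'B', hb'B⟩, ⟨hm₁B', hm₁B⟩⟩
  · -- Case 2: all elements of A ∩ B are below p
    have hdown : ∀ z, z ∈ A → z ∈ B → z < p := by
      intro z hzA hzB
      have h1 : ¬ q < z := fun hq => hup ⟨z, hzA, hzB, hq⟩
      have hzq : z < q := lt_of_le_of_ne (not_lt.1 h1) (fun h' => hs.2.1 (by rw [← h']; exact hzB))
      have hz_ne_p : z ≠ p := fun h' => hs.1 (by rw [← h']; exact hzB)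
      rcases hz_ne_p.lt_or_gt with h' | h'
      · exact h'
      · exact absurd ⟨h', hzq⟩ (hg.2.2.2 z hzA)
    have hcA : c ∈ A := by
      by_contra hno
      obtain ⟨h1', h2'⟩ := hloc c hcB hno
      rcases hcor with h' | h'
      · exact absurd h1' (not_lt.2 h'.le)
      · exact absurd h2' (not_lt.2 h'.le)
    have hcp : c < p := hdown c hcA hcB
    obtain ⟨q'', hg'', hq''p⟩ := gap_above_aux hcA hg.1 hcp
    obtain ⟨B'', hB''E, hs''⟩ := h c q'' hg''
    obtain ⟨b'', hb''B'', hcb'', hb''q''⟩ := hs''.2.2.1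
    have hb''A : b'' ∉ A := fun hb => hg''.2.2.2 b'' hb ⟨hcb'', hb''q''⟩
    obtain ⟨m₂, hm₂B'', hm₂max⟩ := exists_greatest_aux ⟨b'', hb''B''⟩
    have hm₂F : m₂ ∈ F := ⟨B'', c, q'', hB''E, hg'', hs'', hm₂B'', hm₂max⟩
    have hm₀m₂ : m₀ ≤ m₂ := hm₀min m₂ hm₂F
    have hpm₀ : p < m₀ := lt_of_lt_of_le hpb (hm₀max b hbB)
    have hm₂B : m₂ ∉ B := by
      intro hmem
      have hm₂m₀ : m₂ = m₀ := le_antisymm (hm₀max m₂ hmem) hm₀m₂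
      have hm₀B'' : m₀ ∈ B'' := by rw [← hm₂m₀]; exact hm₂B''
      by_cases hA2 : m₀ ∈ A
      · exact absurd (hdown m₀ hA2 hm₀B) (not_lt.2 hpm₀.le)
      · exact absurd ((splitter_loc hfree hA hB''E hg'' hs'' m₀ hm₀B'' hA2).2)
          (not_lt.2 (hq''p.trans hpm₀.le))
    have hbB'' : b ∉ B'' := fun hmem =>
      absurd ((splitter_loc hfree hA hB''E hg'' hs'' b hmem hbA).2)
        (not_lt.2 (hq''p.trans hpb.le))
    have hb''B : b'' ∉ B := fun hmem =>
      absurd ((hloc b'' hmem hb''A).1) (not_lt.2 (hb''q''.le.trans hq''p))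
    have hbm₂ : b < m₂ :=
      lt_of_le_of_ne ((hm₀max b hbB).trans hm₀m₂) (fun h' => hm₂B (by rw [← h']; exact hbB))
    exact hfree B hBE B'' hB''E ⟨c, b'', b, m₂,
      hcb'', lt_of_lt_of_le hb''q'' (hq''p.trans hpb.le), hbm₂,
      ⟨hcB, hs''.1⟩, ⟨hbB, hbB''⟩, ⟨hb''B'', hb''B⟩, ⟨hm₂B'', hm₂B⟩⟩

/-- In a finite ABAB-free hypergraph (with the fixed witnessing vertex order),
every hyperedge (of size at least two) contains a pair of vertices `{p, q}`
such that adding `{p, q}` as a hyperedge keeps the hypergraph ABAB-free. -/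
theorem stmt1 {V : Type*} [Fintype V] [LinearOrder V] (E : Set (Set V))
    (hfree : ABABFree (· < ·) E) :
    ∀ A ∈ E, 2 ≤ A.ncard →
      ∃ p ∈ A, ∃ q ∈ A, p ≠ q ∧ ABABFree (· < ·) (insert {p, q} E) := by
  intro A hAE h2
  obtain ⟨p, q, hg, huns⟩ := exists_unsplittable_gap E hfree hAE h2
  have hpq : p < q := hg.2.2.1
  refine ⟨p, hg.1, q, hg.2.1, hpq.ne, ?_⟩
  intro X hX Y hY habab
  obtain ⟨a1, b1, a2, b2, h1, h2', h3, ha1, ha2, hb1, hb2⟩ := habab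
  rcases Set.mem_insert_iff.1 hX with hXP | hXE <;>
    rcases Set.mem_insert_iff.1 hY with hYP | hYE
  · subst hXP; subst hYP
    exact ha1.2 ha1.1
  · -- X = {p,q}, Y ∈ E : Y splits (p,q)
    subst hXP
    have hmem1 : a1 = p ∨ a1 = q := by
      simpa [Set.mem_insert_iff] using ha1.1
    have hmem2 : a2 = p ∨ a2 = q := by
      simpa [Set.mem_insert_iff] using ha2.1
    have ha12 : a1 < a2 := h1.trans h2'
    rcases hmem1 with rfl | rfl <;> rcases hmem2 with rfl | rfl
    · exact absurd ha12 (lt_irrefl _)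
    · exact huns Y hYE ⟨ha1.2, ha2.2, ⟨b1, hb1.1, h1, h2'⟩, ⟨b2, hb2.1, Or.inr h3⟩⟩
    · exact absurd (hpq.trans ha12) (lt_irrefl _)
    · exact absurd ha12 (lt_irrefl _)
  · -- X ∈ E, Y = {p,q} : X splits (p,q)
    subst hYP
    have hmem1 : b1 = p ∨ b1 = q := by
      simpa [Set.mem_insert_iff] using hb1.1
    have hmem2 : b2 = p ∨ b2 = q := by
      simpa [Set.mem_insert_iff] using hb2.1
    have hb12 : b1 < b2 := h2'.trans h3
    rcases hmem1 with rfl | rfl <;> rcases hmem2 with rfl | rfl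
    · exact absurd hb12 (lt_irrefl _)
    · exact huns X hXE ⟨hb1.2, hb2.2, ⟨a2, ha2.1, h2', h3⟩, ⟨a1, ha1.1, Or.inl h1⟩⟩
    · exact absurd (hpq.trans hb12) (lt_irrefl _)
    · exact absurd hb12 (lt_irrefl _)
  · exact hfree X hXE Y hYE ⟨a1, b1, a2, b2, h1, h2', h3, ha1, ha2, hb1, hb2⟩
end

section
/- For every m ≥ 2 the 2-uniform-tree hypergraph H(m,m), whose vertices are the nodes of the complete m-ary tree of depth m−1, whose hyperedges are the m-element sets of children of each internal node (horizontal hyperedges) and the m-element vertex sets of root-to-leaf paths (vertical hyperedges), is not 2-colorable: every 2-coloring of its vertices yields a monochromatic hyperedge. -/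
/-- Vertices of the full `a`-ary tree whose root-to-leaf paths have `b` vertices:
lists over `Fin a` of length `< b` (the root is `[]`, leaves have length `b - 1`). -/
abbrev TreeV (a b : ℕ) := {l : List (Fin a) // l.length < b}

/-- The horizontal hyperedge of an internal node `p`: the set of its children. -/
def horizontalEdge (a b : ℕ) (p : List (Fin a)) : Set (TreeV a b) :=
  {v | ∃ i : Fin a, v.val = p ++ [i]}

/-- The vertical hyperedge of a leaf: all vertices on the root-to-leaf path,
i.e., all prefixes of the leaf. -/
def verticalEdge (a b : ℕ) (leaf : List (Fin a)) : Set (TreeV a b) :=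
  {v | v.val <+: leaf}

/-- The hyperedges of the hypergraph `H(a,b)`: the sets of children of internal
vertices and the vertex sets of root-to-leaf paths. -/
def Hedges (a b : ℕ) : Set (Set (TreeV a b)) :=
  {E | (∃ p : List (Fin a), p.length + 1 < b ∧ E = horizontalEdge a b p) ∨
       (∃ l : List (Fin a), l.length = b - 1 ∧ E = verticalEdge a b l)}

/-!
If no set of siblings is monochromatic, every internal vertex has a child of each colour.
Starting at the root and always descending to a child of the root's colour then reaches a
leaf along a monochromatic root-to-leaf path.
-/

def extendColoring {a b : ℕ} (c : TreeV a b → Bool) (l : List (Fin a)) : Bool :=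
  if h : l.length < b then c ⟨l, h⟩ else false

lemma extendColoring_val {a b : ℕ} (c : TreeV a b → Bool) (v : TreeV a b) :
    extendColoring c v.val = c v :=
  dif_pos v.2

lemma exists_children_eq_not_or_exists_path_eq {α : Type*} (f : List α → Bool) (col : Bool) :
    ∀ (n : ℕ) (p : List α), (∀ q, q <+: p → f q = col) →
      (∃ q : List α, q.length < p.length + n ∧ ∀ i, f (q ++ [i]) = !col) ∨
      (∃ l : List α, l.length = p.length + n ∧ ∀ q, q <+: l → f q = col) := by
  intro n
  induction n with
  | zero => exact fun p hp => Or.inr ⟨p, rfl, hp⟩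
  | succ n ih =>
    intro p hp
    by_cases hchildren : ∀ i, f (p ++ [i]) = !col
    · exact Or.inl ⟨p, by omega, hchildren⟩
    obtain ⟨i, hi⟩ := not_forall.mp hchildren
    have hpi : ∀ q, q <+: p ++ [i] → f q = col := by
      intro q hq
      rcases List.prefix_concat_iff.mp hq with rfl | hqp
      · simpa using hi
      · exact hp q hqp
    rcases ih (p ++ [i]) hpi with ⟨q, hq, hcol⟩ | ⟨l, hl, hcol⟩
    · exact Or.inl ⟨q, by simp at hq; omega, hcol⟩
    · exact Or.inr ⟨l, by simp at hl; omega, hcol⟩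

theorem exists_monochromatic_mem_Hedges (a b : ℕ) (c : TreeV a b → Bool) :
    ∃ E ∈ Hedges a b, ∃ col : Bool, ∀ v ∈ E, c v = col := by
  set f := extendColoring c
  -- For `b = 0` the value `f []` is junk, but then the vertical edge of `[]` is empty.
  rcases exists_children_eq_not_or_exists_path_eq f (f []) (b - 1) [] (by simp)
    with ⟨q, hq, hcol⟩ | ⟨l, hl, hcol⟩
  · refine ⟨horizontalEdge a b q, Or.inl ⟨q, by simp at hq; omega, rfl⟩, !f [], ?_⟩
    rintro v ⟨i, hv⟩
    rw [← extendColoring_val c v, hv]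
    exact hcol i
  · refine ⟨verticalEdge a b l, Or.inr ⟨l, by simpa using hl, rfl⟩, f [], ?_⟩
    intro v hv
    rw [← extendColoring_val c v]
    exact hcol v.val hv

theorem stmt3_general (m : ℕ) (c : TreeV m m → Bool) :
    ∃ E ∈ Hedges m m, ∃ col : Bool, ∀ v ∈ E, c v = col :=
  exists_monochromatic_mem_Hedges m m c

/-- For every `m ≥ 2` the hypergraph `H(m,m)` is not 2-colorable: every 2-coloring of
its vertices yields a monochromatic hyperedge. -/
theorem stmt3 (m : ℕ) (hm : 2 ≤ m) (c : TreeV m m → Bool) :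
    ∃ E ∈ Hedges m m, ∃ col : Bool, ∀ v ∈ E, c v = col :=
  stmt3_general m c
end

section
/- The hypergraph H(m,m) on the complete m-ary tree (hyperedges: sibling sets and root-to-leaf paths) is ABABA-free: the DFS order of the tree vertices contains no two hyperedges A, B with five vertices a1 < b1 < a2 < b2 < a3 where a1,a2,a3 ∈ A \ B and b1,b2 ∈ B \ A. -/
/-- The DFS (preorder) order on the tree vertices: lexicographic order on the
paths from the root, where a strict prefix comes first. -/
def dfsLT {a b : ℕ} (u v : TreeV a b) : Prop :=
  List.Lex (· < ·) u.val v.val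

section AuxLex

variable {α : Type*} [LinearOrder α]

/-- Transitivity of lexicographic order. -/
lemma lexTrans : ∀ {u v w : List α},
    List.Lex (· < ·) u v → List.Lex (· < ·) v w → List.Lex (· < ·) u w
  | _, _, _, List.Lex.nil, List.Lex.cons _ => List.Lex.nil
  | _, _, _, List.Lex.nil, List.Lex.rel _ => List.Lex.nil
  | _, _, _, List.Lex.cons h1, List.Lex.cons h2 => List.Lex.cons (lexTrans h1 h2)
  | _, _, _, List.Lex.cons _, List.Lex.rel h => List.Lex.rel h
  | _, _, _, List.Lex.rel h, List.Lex.cons _ => List.Lex.rel h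
  | _, _, _, List.Lex.rel h1, List.Lex.rel h2 => List.Lex.rel (h1.trans h2)

/-- Sandwich lemma: anything lexicographically strictly between `p ++ s` and `p ++ t`
also starts with `p`. -/
lemma lex_sandwich : ∀ (p : List α) {x s t : List α},
    List.Lex (· < ·) (p ++ s) x → List.Lex (· < ·) x (p ++ t) →
    ∃ r, x = p ++ r ∧ List.Lex (· < ·) s r ∧ List.Lex (· < ·) r t
  | [], x, s, t, h1, h2 => ⟨x, rfl, h1, h2⟩
  | a :: p, x, s, t, h1, h2 => by
    cases x with
    | nil => exact absurd h1 List.not_lex_nil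
    | cons c x =>
      cases h1 with
      | cons h1' =>
        cases h2 with
        | cons h2' =>
          obtain ⟨r, rfl, hs, ht⟩ := lex_sandwich p h1' h2'
          exact ⟨r, rfl, hs, ht⟩
        | rel h => exact absurd h (lt_irrefl _)
      | rel h =>
        cases h2 with
        | cons h2' => exact absurd h (lt_irrefl _)
        | rel h' => exact absurd (h.trans h') (lt_irrefl _)

/-- A prefix is never lexicographically greater. -/
lemma not_lex_of_prefix : ∀ (u d : List α), ¬ List.Lex (· < ·) (u ++ d) u
  | [], _, h => List.not_lex_nil h
  | a :: u, d, h => by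
    cases h with
    | cons h' => exact not_lex_of_prefix u d h'
    | rel h' => exact absurd h' (lt_irrefl _)

lemma lex_singleton_cons {i k : α} {r : List α} (h : List.Lex (· < ·) [i] (k :: r)) :
    i ≤ k := by
  cases h with
  | cons _ => exact le_refl _
  | rel h => exact le_of_lt h

lemma lex_cons_singleton {k t : α} {r : List α} (h : List.Lex (· < ·) (k :: r) [t]) :
    k < t := by
  cases h with
  | cons h' => exact absurd h' List.not_lex_nil
  | rel h => exact h

lemma ne_nil_of_lex_singleton {i : α} {r : List α} (h : List.Lex (· < ·) [i] r) :
    r ≠ [] := by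
  rintro rfl; exact List.not_lex_nil h

/-- Two prefixes of the same list in lex order: the smaller is a prefix of the larger. -/
lemma prefix_of_lex_of_prefix {u v w : List α} (hu : u <+: w) (hv : v <+: w)
    (h : List.Lex (· < ·) u v) : u <+: v := by
  rcases List.prefix_or_prefix_of_prefix hu hv with h' | h'
  · exact h'
  · obtain ⟨d, rfl⟩ := h'
    exact absurd h (not_lex_of_prefix v d)

end AuxLex

lemma lex_append_left_cancel {α : Type*} [LinearOrder α] : ∀ (p : List α) {s t : List α},
    List.Lex (· < ·) (p ++ s) (p ++ t) → List.Lex (· < ·) s t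
  | [], _, _, h => h
  | _ :: p, _, _, h => by
    cases h with
    | cons h' => exact lex_append_left_cancel p h'
    | rel h' => exact absurd h' (lt_irrefl _)

/-- `H(m,m)` is ABABA-free with respect to the DFS order: there are no two hyperedges
`A`, `B` and vertices `a1 < b1 < a2 < b2 < a3` with `a1,a2,a3 ∈ A \ B` and
`b1,b2 ∈ B \ A`. -/
theorem stmt4 (m : ℕ) (hm : 2 ≤ m) :
    ∀ A ∈ Hedges m m, ∀ B ∈ Hedges m m,
      ¬ ∃ a1 b1 a2 b2 a3 : TreeV m m,
        dfsLT a1 b1 ∧ dfsLT b1 a2 ∧ dfsLT a2 b2 ∧ dfsLT b2 a3 ∧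
        a1 ∈ A \ B ∧ a2 ∈ A \ B ∧ a3 ∈ A \ B ∧ b1 ∈ B \ A ∧ b2 ∈ B \ A := by
  intro A hA B hB
  rintro ⟨a1, b1, a2, b2, a3, h1, h2, h3, h4, ha1, ha2, ha3, hb1, hb2⟩
  unfold dfsLT at h1 h2 h3 h4
  rcases hA with ⟨p, hp, rfl⟩ | ⟨l, hl, rfl⟩
  · -- A horizontal with parent p
    obtain ⟨i1, e1⟩ := ha1.1
    obtain ⟨i2, e2⟩ := ha2.1
    obtain ⟨i3, e3⟩ := ha3.1
    rcases hB with ⟨q, hq, rfl⟩ | ⟨l', hl', rfl⟩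
    · -- B horizontal with parent q
      obtain ⟨s1, f1⟩ := hb1.1
      obtain ⟨s2, f2⟩ := hb2.1
      have h1a := h1; rw [e1] at h1a
      have h2a := h2; rw [e2] at h2a
      obtain ⟨r1, hr1, hs1, -⟩ := lex_sandwich p h1a h2a
      have hr1ne : r1 ≠ [] := ne_nil_of_lex_singleton hs1
      have hlen : q.length + 1 = p.length + r1.length := by
        have := congrArg List.length (hr1.symm.trans f1)
        simpa [List.length_append] using this.symm
      have hr1len : 1 ≤ r1.length := List.length_pos_iff.mpr hr1ne
      have hqp : p.length ≤ q.length := by omega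
      rcases eq_or_lt_of_le hqp with heq | hlt
      · have := List.append_inj (f1.symm.trans hr1) heq.symm
        exact hb1.2 ⟨s1, by rw [f1, this.1]⟩
      · have h2b := h2; rw [f1] at h2b
        have h3b := h3; rw [f2] at h3b
        obtain ⟨r, hr, hsr, -⟩ := lex_sandwich q h2b h3b
        have hrlen : 1 ≤ r.length := List.length_pos_iff.mpr (ne_nil_of_lex_singleton hsr)
        have : p.length + 1 = q.length + r.length := by
          have := congrArg List.length (hr.symm.trans e2)
          simpa [List.length_append] using this.symm
        omega
    · -- B vertical with leaf l'
      rw [e1] at h1; rw [e2] at h2 h3; rw [e3] at h4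
      obtain ⟨r1, hr1, hs1, ht1⟩ := lex_sandwich p h1 h2
      obtain ⟨r2, hr2, hs2, -⟩ := lex_sandwich p h3 h4
      cases r1 with
      | nil => exact absurd hs1 List.not_lex_nil
      | cons j1 r1' =>
      cases r2 with
      | nil => exact absurd hs2 List.not_lex_nil
      | cons j2 r2' =>
      have hj1 : j1 < i2 := lex_cons_singleton ht1
      have hj2 : i2 ≤ j2 := lex_singleton_cons hs2
      have hlex12 : List.Lex (· < ·) b1.val b2.val := lexTrans h2 h3
      have hpre : b1.val <+: b2.val := prefix_of_lex_of_prefix hb1.1 hb2.1 hlex12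
      rw [hr1, hr2, List.prefix_append_right_inj, List.cons_prefix_cons] at hpre
      exact absurd hj1 (by rw [hpre.1]; exact not_lt.mpr hj2)
  · -- A vertical with leaf l
    rcases hB with ⟨q, hq, rfl⟩ | ⟨l', hl', rfl⟩
    · -- B horizontal with parent q
      obtain ⟨s1, f1⟩ := hb1.1
      obtain ⟨s2, f2⟩ := hb2.1
      rw [f1] at h2; rw [f2] at h3 h4
      obtain ⟨r, hr, hsr, htr⟩ := lex_sandwich q h2 h3
      cases r with
      | nil => exact absurd hsr List.not_lex_nil
      | cons k r' =>
      have hk : k < s2 := lex_cons_singleton htr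
      have hlex23 : List.Lex (· < ·) a2.val a3.val := lexTrans h3 h4
      have hpre : a2.val <+: a3.val := prefix_of_lex_of_prefix ha2.1 ha3.1 hlex23
      obtain ⟨d, hd⟩ := hpre
      rw [← hd, hr] at h4
      have h4' : List.Lex (· < ·) (q ++ [s2]) (q ++ (k :: (r' ++ d))) := by
        simpa using h4
      have : s2 ≤ k := lex_singleton_cons (lex_append_left_cancel q h4')
      exact absurd hk (not_lt.mpr this)
    · -- B vertical with leaf l'
      have hlex12 : List.Lex (· < ·) b1.val b2.val := lexTrans h2 h3
      have hpre : b1.val <+: b2.val := prefix_of_lex_of_prefix hb1.1 hb2.1 hlex12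
      obtain ⟨d, hd⟩ := hpre
      have h2' : List.Lex (· < ·) (b1.val ++ []) a2.val := by simpa using h2
      rw [← hd] at h3
      obtain ⟨r, hr, -, -⟩ := lex_sandwich b1.val h2' h3
      exact hb1.2 (List.IsPrefix.trans ⟨r, hr.symm⟩ ha2.1)
end

section
/- For every c ≥ 2 and m ≥ 2 there exists an m-uniform ABABA-free hypergraph that is not c-colorable. -/
/-- An `ABABA`-sequence for two hyperedges `A`, `B` with respect to a strict order `lt`. -/
def ABABAseq {V : Type*} (lt : V → V → Prop) (A B : Set V) : Prop :=
  ∃ a1 b1 a2 b2 a3 : V, lt a1 b1 ∧ lt b1 a2 ∧ lt a2 b2 ∧ lt b2 a3 ∧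
    a1 ∈ A \ B ∧ a2 ∈ A \ B ∧ a3 ∈ A \ B ∧ b1 ∈ B \ A ∧ b2 ∈ B \ A

/-- A hypergraph is ABABA-free with respect to the order `lt`. -/
def ABABAFree {V : Type*} (lt : V → V → Prop) (E : Set (Set V)) : Prop :=
  ∀ A ∈ E, ∀ B ∈ E, ¬ ABABAseq lt A B

namespace ABABA5

variable {α : Type} [LinearOrder α]

lemma lt_append_cons : ∀ (u : List α) (a : α) (t : List α), u < u ++ a :: t
  | [], a, t => List.Lex.nil
  | h :: u', a, t => List.Lex.cons (lt_append_cons u' a t)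

lemma prefix_le {u v : List α} (h : u <+: v) : u ≤ v := by
  obtain ⟨t, rfl⟩ := h
  cases t with
  | nil => simp
  | cons a t => exact le_of_lt (lt_append_cons u a t)

lemma head_le_head {a b : α} {l₁ l₂ : List α} (h : (a :: l₁) ≤ (b :: l₂)) : a ≤ b := by
  rcases eq_or_lt_of_le h with h | h
  · cases h; exact le_rfl
  · exact List.head_le_of_lt h

lemma tail_le_tail {a : α} {l₁ l₂ : List α} (h : (a :: l₁) ≤ (a :: l₂)) : l₁ ≤ l₂ := by
  rcases eq_or_lt_of_le h with h | h
  · cases h; exact le_rfl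
  · cases h with
    | cons h => exact le_of_lt h
    | rel h => exact absurd h (lt_irrefl a)

lemma between : ∀ (u : List α) {a b x : List α},
    u <+: a → u <+: b → a ≤ x → x ≤ b → u <+: x := by
  intro u
  induction u with
  | nil => intro a b x _ _ _ _; exact List.nil_prefix
  | cons h u' ih =>
    intro a b x ha hb hax hxb
    obtain ⟨ta, rfl⟩ := ha
    obtain ⟨tb, rfl⟩ := hb
    rw [List.cons_append] at hax hxb
    cases x with
    | nil =>
      rcases eq_or_lt_of_le hax with h' | h'
      · exact absurd h' (by simp)
      · exact absurd h' (List.not_lex_nil)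
    | cons h1 x' =>
      have e1 : h ≤ h1 := head_le_head hax
      have e2 : h1 ≤ h := head_le_head hxb
      have : h1 = h := le_antisymm e2 e1
      subst this
      have t1 : (u' ++ ta) ≤ x' := tail_le_tail hax
      have t2 : x' ≤ (u' ++ tb) := tail_le_tail hxb
      exact List.cons_prefix_cons.2 ⟨rfl, ih (List.prefix_append u' ta) (List.prefix_append u' tb) t1 t2⟩

lemma prefix_comp {v1 v2 w : List α} (h1 : v1 <+: w) (h2 : v2 <+: w) (hlt : v1 < v2) :
    v1 <+: v2 := by
  rcases le_total v1.length v2.length with h | h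
  · exact List.prefix_of_prefix_length_le h1 h2 h
  · have := prefix_le (List.prefix_of_prefix_length_le h2 h1 h)
    exact absurd hlt (not_lt.2 this)

lemma append_singleton_lt : ∀ (u : List α) {x y : α}, u ++ [x] < u ++ [y] → x < y := by
  intro u
  induction u with
  | nil =>
    intro x y h
    have : List.Lex (· < ·) [x] [y] := h
    exact (List.lex_singleton_iff x y).1 this
  | cons a u' ih =>
    intro x y h
    rw [List.cons_append, List.cons_append] at h
    cases h with
    | cons h => exact ih h
    | rel h => exact absurd h (lt_irrefl a)


def VT (α : Type) (m : ℕ) : Type := {l : List α // l.length ≤ m}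

instance (m : ℕ) : LinearOrder (VT α m) := Subtype.instLinearOrder _

def chainEdge (m : ℕ) (w : List α) : Set (VT α m) := {v | v.1 ≠ [] ∧ v.1 <+: w}

def copyEdge (m : ℕ) (u : List α) (A : Set α) : Set (VT α m) :=
  {v | ∃ x ∈ A, v.1 = u ++ [x]}

def Edges (m : ℕ) (E' : Set (Set α)) : Set (Set (VT α m)) :=
  {A | (∃ w : List α, w.length = m ∧ A = chainEdge m w) ∨
       (∃ u : List α, u.length < m ∧ ∃ A' ∈ E', A = copyEdge m u A')}

lemma free (m : ℕ) (E' : Set (Set α))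
    (hfree : ABABAFree (· < · : α → α → Prop) E') :
    ABABAFree (· < · : VT α m → VT α m → Prop) (Edges m E') := by
  rintro A hA B hB ⟨a1, b1, a2, b2, a3, l1, l2, l3, l4, ha1, ha2, ha3, hb1, hb2⟩
  have L1 : a1.1 < b1.1 := l1
  have L2 : b1.1 < a2.1 := l2
  have L3 : a2.1 < b2.1 := l3
  have L4 : b2.1 < a3.1 := l4
  rcases hA with ⟨w, hw, rfl⟩ | ⟨u, hu, A', hA', rfl⟩
  · rcases hB with ⟨w', hw', rfl⟩ | ⟨u, hu, B', hB', rfl⟩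
    · -- chain vs chain
      have hb12 : b1.1 <+: b2.1 := prefix_comp hb1.1.2 hb2.1.2 (L2.trans L3)
      have hba2 : b1.1 <+: a2.1 := between b1.1 List.prefix_rfl hb12 L2.le L3.le
      exact hb1.2 ⟨hb1.1.1, hba2.trans ha2.1.2⟩
    · -- chain vs copy
      obtain ⟨y1, hy1, he1⟩ := hb1.1
      obtain ⟨y2, hy2, he2⟩ := hb2.1
      have hub1 : u <+: b1.1 := ⟨[y1], he1.symm⟩
      have hub2 : u <+: b2.1 := ⟨[y2], he2.symm⟩
      have hua2 : u <+: a2.1 := between u hub1 hub2 L2.le L3.le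
      rcases eq_or_ne u a2.1 with h | h
      · subst h
        exact absurd L2 (not_lt.2 (prefix_le hub1))
      · have hlen : u.length < a2.1.length :=
          lt_of_le_of_ne hua2.length_le (fun he => h (hua2.eq_of_length he))
        have ha23 : a2.1 <+: a3.1 := prefix_comp ha2.1.2 ha3.1.2 (L3.trans L4)
        set q := a2.1.take (u.length + 1) with hq
        have hq2 : q <+: a2.1 := List.take_prefix _ _
        have hq3 : q <+: a3.1 := hq2.trans ha23
        have hqb2 : q <+: b2.1 := between q hq2 hq3 L3.le L4.le
        have hqlen : q.length = u.length + 1 := by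
          rw [hq, List.length_take]; omega
        have : q = b2.1 := hqb2.eq_of_length (by rw [hqlen, he2]; simp)
        rw [this] at hq2
        exact absurd L3 (not_lt.2 (prefix_le hq2))
  · rcases hB with ⟨w, hw, rfl⟩ | ⟨u', hu', B', hB', rfl⟩
    · -- copy vs chain
      obtain ⟨x1, hx1, he1⟩ := ha1.1
      obtain ⟨x2, hx2, he2⟩ := ha2.1
      obtain ⟨x3, hx3, he3⟩ := ha3.1
      have hua1 : u <+: a1.1 := ⟨[x1], he1.symm⟩
      have hua2 : u <+: a2.1 := ⟨[x2], he2.symm⟩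
      have hua3 : u <+: a3.1 := ⟨[x3], he3.symm⟩
      have hub1 : u <+: b1.1 := between u hua1 hua2 L1.le L2.le
      have hub2 : u <+: b2.1 := between u hua2 hua3 L3.le L4.le
      rcases eq_or_ne u b1.1 with h | h
      · have : b1.1 <+: a1.1 := h ▸ hua1
        exact absurd L1 (not_lt.2 (prefix_le this))
      · have hlen : u.length < b1.1.length :=
          lt_of_le_of_ne hub1.length_le (fun he => h (hub1.eq_of_length he))
        have hb12 : b1.1 <+: b2.1 := prefix_comp hb1.1.2 hb2.1.2 (L2.trans L3)
        set q := b1.1.take (u.length + 1) with hq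
        have hq1 : q <+: b1.1 := List.take_prefix _ _
        have hq2 : q <+: b2.1 := hq1.trans hb12
        have hqa2 : q <+: a2.1 := between q hq1 hq2 L2.le L3.le
        have hqlen : q.length = u.length + 1 := by
          rw [hq, List.length_take]; omega
        have : q = a2.1 := hqa2.eq_of_length (by rw [hqlen, he2]; simp)
        rw [this] at hq1
        exact absurd L2 (not_lt.2 (prefix_le hq1))
    · -- copy vs copy
      obtain ⟨x1, hx1, he1⟩ := ha1.1
      obtain ⟨x2, hx2, he2⟩ := ha2.1
      obtain ⟨x3, hx3, he3⟩ := ha3.1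
      obtain ⟨y1, hy1, hf1⟩ := hb1.1
      obtain ⟨y2, hy2, hf2⟩ := hb2.1
      rcases eq_or_ne u u' with rfl | hne
      · -- same node: reduce to E'
        refine hfree A' hA' B' hB' ⟨x1, y1, x2, y2, x3, ?_, ?_, ?_, ?_,
          ⟨hx1, ?_⟩, ⟨hx2, ?_⟩, ⟨hx3, ?_⟩, ⟨hy1, ?_⟩, ⟨hy2, ?_⟩⟩
        · exact append_singleton_lt u (he1 ▸ hf1 ▸ L1)
        · exact append_singleton_lt u (hf1 ▸ he2 ▸ L2)
        · exact append_singleton_lt u (he2 ▸ hf2 ▸ L3)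
        · exact append_singleton_lt u (hf2 ▸ he3 ▸ L4)
        · exact fun hx => ha1.2 ⟨x1, hx, he1⟩
        · exact fun hx => ha2.2 ⟨x2, hx, he2⟩
        · exact fun hx => ha3.2 ⟨x3, hx, he3⟩
        · exact fun hy => hb1.2 ⟨y1, hy, hf1⟩
        · exact fun hy => hb2.2 ⟨y2, hy, hf2⟩
      · have hua1 : u <+: a1.1 := ⟨[x1], he1.symm⟩
        have hua2 : u <+: a2.1 := ⟨[x2], he2.symm⟩
        have hua3 : u <+: a3.1 := ⟨[x3], he3.symm⟩
        have hvb1 : u' <+: b1.1 := ⟨[y1], hf1.symm⟩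
        have hvb2 : u' <+: b2.1 := ⟨[y2], hf2.symm⟩
        have hub1 : u <+: b1.1 := between u hua1 hua2 L1.le L2.le
        have hub2 : u <+: b2.1 := between u hua2 hua3 L3.le L4.le
        have hva2 : u' <+: a2.1 := between u' hvb1 hvb2 L2.le L3.le
        rcases le_or_gt u.length u'.length with h | h
        · have huu' : u <+: u' := List.prefix_of_prefix_length_le hub1 hvb1 h
          have : u'.length = u.length + 1 := by
            have h1 : u'.length ≤ a2.1.length := hva2.length_le
            have h2 : u.length ≤ u'.length := huu'.length_le
            have h3 : u.length ≠ u'.length := fun he => hne (huu'.eq_of_length he)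
            rw [he2] at h1; simp at h1; omega
          have : u' = a2.1 := hva2.eq_of_length (by rw [he2]; simp; omega)
          have : a2.1 <+: b1.1 := this ▸ hvb1
          exact absurd L2 (not_lt.2 (prefix_le this))
        · have hu'u : u' <+: u := List.prefix_of_prefix_length_le hva2 hua2 h.le
          have : u = b1.1 := hub1.eq_of_length (by
            rw [hf1]
            have h1 : u.length ≤ b1.1.length := hub1.length_le
            rw [hf1] at h1; simp at h1 ⊢; omega)
          have : b1.1 <+: a1.1 := this ▸ hua1
          exact absurd L1 (not_lt.2 (prefix_le this))

lemma uniform (m : ℕ) (hm : 1 ≤ m) (E' : Set (Set α)) (hU : ∀ A ∈ E', A.ncard = m) :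
    ∀ A ∈ Edges m E', A.ncard = m := by
  rintro A (⟨w, hw, rfl⟩ | ⟨u, hu, A', hA', rfl⟩)
  · -- chain edge
    have hlen : ∀ i : Fin m, (w.take (i.1 + 1)).length = i.1 + 1 := by
      intro i; rw [List.length_take]; omega
    set f : Fin m → VT α m := fun i => ⟨w.take (i.1 + 1), by rw [hlen]; omega⟩ with hf
    have hinj : Function.Injective f := by
      intro i j hij
      have : (f i).1.length = (f j).1.length := by rw [hij]
      rw [hf] at this; simp only [hlen] at this
      exact Fin.ext (by omega)
    have himg : chainEdge m w = f '' Set.univ := by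
      ext v
      constructor
      · rintro ⟨hne, hpre⟩
        have h1 : 1 ≤ v.1.length := by
          cases h : v.1 with
          | nil => exact absurd h hne
          | cons a t => simp [h]
        have h2 : v.1.length ≤ m := by
          have := hpre.length_le; omega
        refine ⟨⟨v.1.length - 1, by omega⟩, Set.mem_univ _, ?_⟩
        apply Subtype.ext
        simp only [hf]
        have : v.1.length - 1 + 1 = v.1.length := by omega
        rw [this]
        exact (List.prefix_iff_eq_take.1 hpre).symm
      · rintro ⟨i, -, rfl⟩
        refine ⟨?_, List.take_prefix _ _⟩
        intro hnil
        have := hlen i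
        rw [hf] at hnil
        simp only at hnil
        rw [hnil] at this
        simp at this
    rw [himg, Set.ncard_image_of_injective _ hinj, Set.ncard_univ]
    simp
  · -- copy edge
    set g : α → VT α m := fun x => ⟨u ++ [x], by simp; omega⟩ with hg
    have hinj : Function.Injective g := by
      intro x y hxy
      have : u ++ [x] = u ++ [y] := congrArg Subtype.val hxy
      simpa using this
    have himg : copyEdge m u A' = g '' A' := by
      ext v
      constructor
      · rintro ⟨x, hx, hvx⟩
        exact ⟨x, hx, Subtype.ext hvx.symm⟩
      · rintro ⟨x, hx, rfl⟩
        exact ⟨x, hx, rfl⟩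
    rw [himg, Set.ncard_image_of_injective _ hinj]
    exact hU A' hA'

lemma chrom (m c : ℕ) (hm : 1 ≤ m) (E' : Set (Set α)) (hα : Nonempty α)
    (hcol' : ∀ col : α → Fin (c + 1), ∃ A ∈ E', ∃ b, ∀ x ∈ A, col x = b) :
    ∀ col : VT α m → Fin (c + 2), ∃ A ∈ Edges m E', ∃ b, ∀ v ∈ A, col v = b := by
  intro col
  classical
  set last : Fin (c + 2) := Fin.last (c + 1) with hlast
  set colL : List α → Fin (c + 2) := fun l =>
    if h : l.length ≤ m then col ⟨l, h⟩ else last with hcolL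
  by_cases H : ∀ u : List α, u.length < m → ∃ x : α, colL (u ++ [x]) = last
  · -- build a monochromatic chain
    set pick : List α → α := fun u =>
      if h : ∃ x : α, colL (u ++ [x]) = last then h.choose else hα.some with hpick
    set f : ℕ → List α := fun k => Nat.rec [] (fun _ ih => ih ++ [pick ih]) k with hfdef
    have hflen : ∀ k, (f k).length = k := by
      intro k; induction k with
      | zero => rfl
      | succ n ih => simp only [hfdef] at ih ⊢; simp [ih]
    have hfcol : ∀ k, k < m → colL (f (k + 1)) = last := by
      intro k hk
      have hex : ∃ x : α, colL (f k ++ [x]) = last := H (f k) (by rw [hflen]; exact hk)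
      have : f (k + 1) = f k ++ [pick (f k)] := rfl
      rw [this, hpick]
      simp only [dif_pos hex]
      exact hex.choose_spec
    have hfpre : ∀ j k, j ≤ k → f j <+: f k := by
      intro j k hjk
      induction k with
      | zero => cases Nat.le_zero.1 hjk; exact List.prefix_rfl
      | succ n ih =>
        rcases Nat.lt_succ_iff_lt_or_eq.1 (Nat.lt_succ_of_le hjk) with h | h
        · exact (ih (by omega)).trans ⟨[pick (f n)], rfl⟩
        · rw [h]
      -- note: careful with cases
    refine ⟨chainEdge m (f m), Or.inl ⟨f m, hflen m, rfl⟩, last, ?_⟩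
    rintro v ⟨hne, hpre⟩
    have h1 : 1 ≤ v.1.length := by
      cases h : v.1 with
      | nil => exact absurd h hne
      | cons a t => simp [h]
    have h2 : v.1.length ≤ m := by have := hpre.length_le; rw [hflen] at this; omega
    have hveq : v.1 = f v.1.length := by
      have h3 : f v.1.length <+: f m := hfpre _ _ h2
      have h4 : v.1 = (f m).take v.1.length := List.prefix_iff_eq_take.1 hpre
      have h5 : f v.1.length = (f m).take (v.1.length) := by
        rw [List.prefix_iff_eq_take.1 h3, hflen]
      exact h4.trans h5.symm
    have : colL v.1 = last := by
      have : v.1.length = (v.1.length - 1) + 1 := by omega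
      rw [hveq, this]
      exact hfcol _ (by omega)
    rw [hcolL] at this
    simp only [dif_pos v.2] at this
    rw [← this]
    congr 1
  · -- some node has no child colored `last`; use the copy edge from IH
    push_neg at H
    obtain ⟨u, hulen, hunolast⟩ := H
    have hmem : ∀ x : α, (u ++ [x]).length ≤ m := by intro x; simp; omega
    have hne : ∀ x : α, col ⟨u ++ [x], hmem x⟩ ≠ last := by
      intro x hx
      apply hunolast x
      rw [hcolL]
      simp only [dif_pos (hmem x)]
      exact hx
    set col' : α → Fin (c + 1) := fun x =>
      ⟨(col ⟨u ++ [x], hmem x⟩).1, by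
        have h1 := (col ⟨u ++ [x], hmem x⟩).2
        have h2 : (col ⟨u ++ [x], hmem x⟩).1 ≠ c + 1 := by
          intro hv
          exact hne x (Fin.ext (by simp [hlast, hv]))
        omega⟩ with hcol'def
    obtain ⟨A', hA', b', hmono⟩ := hcol' col'
    refine ⟨copyEdge m u A', Or.inr ⟨u, hulen, A', hA', rfl⟩, b'.castSucc, ?_⟩
    rintro v ⟨x, hx, hvx⟩
    have hv : v = ⟨u ++ [x], hmem x⟩ := Subtype.ext hvx
    have := hmono x hx
    rw [hcol'def] at this
    have hval : (col ⟨u ++ [x], hmem x⟩).1 = b'.1 := congrArg Fin.val this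
    rw [hv]
    exact Fin.ext (by simpa using hval)



/-- The statement we prove by induction on the number of colors. -/
def Stmt (m c : ℕ) : Prop :=
  ∃ (V : Type) (_ : Fintype V) (E : Set (Set V)),
      (∀ A ∈ E, A.ncard = m) ∧
      (∃ ord : LinearOrder V, ABABAFree ord.lt E) ∧
      (∀ col : V → Fin c, ∃ A ∈ E, ∃ b : Fin c, ∀ v ∈ A, col v = b)

lemma base (m : ℕ) : Stmt m 1 := by
  refine ⟨Fin m, inferInstance, {Set.univ}, ?_, ⟨inferInstance, ?_⟩, ?_⟩
  · rintro A rfl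
    rw [Set.ncard_univ]; simp
  · rintro A rfl B rfl ⟨a1, b1, a2, b2, a3, l1, l2, l3, l4, ha1, ha2, ha3, hb1, hb2⟩
    exact ha1.2 ha1.1
  · intro col
    exact ⟨Set.univ, rfl, 0, fun v _ => Subsingleton.elim _ _⟩

lemma step (m c : ℕ) (hm : 1 ≤ m) (ih : Stmt m (c + 1)) : Stmt m (c + 2) := by
  obtain ⟨α, fα, E', hunif, ⟨ord', hfree'⟩, hchrom'⟩ := ih
  letI := ord'
  letI : Fintype α := fα
  have hα : Nonempty α := by
    obtain ⟨A, hA, -, -⟩ := hchrom' (fun _ => 0)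
    have h1 : A.ncard = m := hunif A hA
    obtain ⟨x, -⟩ := Set.nonempty_of_ncard_ne_zero (s := A) (by rw [h1]; omega)
    exact ⟨x⟩
  have hfin : Finite (VT α m) := by
    have := List.finite_length_le α m
    exact this.to_subtype
  refine ⟨VT α m, Fintype.ofFinite _, Edges m E',
    uniform m hm E' hunif, ⟨inferInstance, ?_⟩, ?_⟩
  · exact free m E' hfree'
  · exact chrom m c hm E' hα hchrom'

lemma main (m c : ℕ) (hc : 1 ≤ c) (hm : 1 ≤ m) : Stmt m c := by
  obtain ⟨k, rfl⟩ : ∃ k, c = k + 1 := ⟨c - 1, by omega⟩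
  clear hc
  induction k with
  | zero => exact base m
  | succ n ihn => exact step m n hm ihn

end ABABA5

/-- For every `c ≥ 2` and `m ≥ 2` there exists an `m`-uniform ABABA-free hypergraph
which is not `c`-colorable. -/
theorem stmt5 (c m : ℕ) (hc : 2 ≤ c) (hm : 2 ≤ m) :
    ∃ (V : Type) (_ : Fintype V) (E : Set (Set V)),
      (∀ A ∈ E, A.ncard = m) ∧
      (∃ ord : LinearOrder V, ABABAFree ord.lt E) ∧
      (∀ col : V → Fin c, ∃ A ∈ E, ∃ b : Fin c, ∀ v ∈ A, col v = b) := by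
  exact ABABA5.main m c (by omega) (by omega)
end

section
/- In the recursive construction H_c built on the tree T(n_{c-1}, m) — whose vertical hyperedges are root-to-leaf paths and whose horizontal hyperedges come from copies of H_{c-1} on each sibling set — every c-coloring of the vertices contains a monochromatic hyperedge. -/
/-! If some internal vertex `p` has no child of some colour `b`, the children of `p` are
coloured with the `c - 1` remaining colours, so the copy of `H_{c-1}` on them contains a
monochromatic hyperedge. Otherwise every internal vertex has a child of every colour, and
starting from the root we can keep choosing a child of the root's colour down to a leaf:
this root-to-leaf path is monochromatic. -/

/-- Vertices of the full tree with branching set `W` whose root-to-leaf paths have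
`m` vertices: lists over `W` of length `< m`. -/
abbrev TreeW (W : Type) (m : ℕ) := {l : List W // l.length < m}

/-- The horizontal hyperedge on the children of the internal node `p` induced by a
hyperedge `A` of a hypergraph on the branching set `W` (a copy of `H_{c-1}`). -/
def horizW (W : Type) (m : ℕ) (p : List W) (A : Set W) : Set (TreeW W m) :=
  {v | ∃ w ∈ A, v.val = p ++ [w]}

/-- The vertical hyperedge of a leaf: all vertices of the root-to-leaf path. -/
def vertW (W : Type) (m : ℕ) (leaf : List W) : Set (TreeW W m) :=
  {v | v.val <+: leaf}

/-- Hyperedges of the recursive hypergraph `H_c` built on the tree `T(W, m)` from a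
hypergraph with edge set `E'` on the branching set `W`: all root-to-leaf paths
(vertical hyperedges) and, for each internal vertex, a copy of `E'` on its children
(horizontal hyperedges). -/
def recEdges (W : Type) (m : ℕ) (E' : Set (Set W)) : Set (Set (TreeW W m)) :=
  {E | (∃ p : List W, p.length + 1 < m ∧ ∃ A ∈ E', E = horizW W m p A) ∨
       (∃ l : List W, l.length = m - 1 ∧ E = vertW W m l)}

variable {V κ : Type*}

def HasMonochromaticEdge (E : Set (Set V)) (col : V → κ) : Prop :=
  ∃ A ∈ E, ∃ b, ∀ v ∈ A, col v = b

lemma HasMonochromaticEdge.comp {κ' : Type*} {E : Set (Set V)} {col : V → κ}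
    (h : HasMonochromaticEdge E col) (f : κ → κ') : HasMonochromaticEdge E (f ∘ col) := by
  obtain ⟨A, hA, b, hb⟩ := h
  exact ⟨A, hA, f b, fun v hv => congrArg f (hb v hv)⟩

lemma hasMonochromaticEdge_of_forall_ne {n : ℕ} {E : Set (Set V)}
    (hE : ∀ col : V → Fin n, HasMonochromaticEdge E col) {col : V → Fin (n + 1)}
    {b : Fin (n + 1)} (hb : ∀ v, col v ≠ b) : HasMonochromaticEdge E col := by
  choose col' hcol' using fun v => Fin.exists_succAbove_eq (hb v)
  have hcol : col = b.succAbove ∘ col' := funext fun v => (hcol' v).symm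
  exact hcol ▸ (hE col').comp _

section Tree

variable {W : Type} {m : ℕ} {E' : Set (Set W)}

lemma hasMonochromaticEdge_recEdges_of_children (col : TreeW W m → κ) {p : List W}
    (hp : p.length + 1 < m)
    (h : HasMonochromaticEdge E' fun w => col ⟨p ++ [w], by simpa using hp⟩) :
    HasMonochromaticEdge (recEdges W m E') col := by
  obtain ⟨A, hA, b, hb⟩ := h
  refine ⟨horizW W m p A, Or.inl ⟨p, hp, A, hA, rfl⟩, b, ?_⟩
  rintro ⟨_, _⟩ ⟨w, hw, rfl⟩
  exact hb w hw

lemma exists_monochromatic_vertW (col : TreeW W m → κ) {b : κ} (hm : 0 < m)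
    (hroot : col ⟨[], hm⟩ = b)
    (hchild : ∀ (p : List W) (hp : p.length + 1 < m),
      ∃ w, col ⟨p ++ [w], by simpa using hp⟩ = b) :
    ∀ k < m, ∃ l : List W, l.length = k ∧ ∀ v ∈ vertW W m l, col v = b := by
  intro k hk
  induction k with
  | zero =>
    refine ⟨[], rfl, fun ⟨t, ht⟩ htl => ?_⟩
    obtain rfl : t = [] := List.prefix_nil.mp htl
    exact hroot
  | succ k ih =>
    obtain ⟨l, rfl, hl⟩ := ih (by omega)
    obtain ⟨w, hw⟩ := hchild l hk
    refine ⟨l ++ [w], by simp, fun ⟨t, ht⟩ htl => ?_⟩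
    rcases List.prefix_concat_iff.mp htl with rfl | htl
    · exact hw
    · exact hl _ htl

lemma hasMonochromaticEdge_recEdges_of_forall_exists_child (col : TreeW W m → κ)
    (hm : 0 < m)
    (hchild : ∀ (p : List W) (hp : p.length + 1 < m) b,
      ∃ w, col ⟨p ++ [w], by simpa using hp⟩ = b) :
    HasMonochromaticEdge (recEdges W m E') col := by
  obtain ⟨l, hl, hmono⟩ :=
    exists_monochromatic_vertW col hm rfl (fun p hp => hchild p hp _) (m - 1) (by omega)
  exact ⟨vertW W m l, Or.inr ⟨l, hl, rfl⟩, _, hmono⟩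

end Tree

theorem stmt6_general (m c : ℕ) (hm : 2 ≤ m)
    (W : Type) (E' : Set (Set W))
    (hW : ∀ col' : W → Fin (c - 1), ∃ A ∈ E', ∃ b : Fin (c - 1), ∀ w ∈ A, col' w = b) :
    ∀ col : TreeW W m → Fin c,
      ∃ E ∈ recEdges W m E', ∃ b : Fin c, ∀ v ∈ E, col v = b := by
  intro col
  by_cases h : ∃ p : List W, ∃ hp : p.length + 1 < m, ∃ b,
      ∀ w, col ⟨p ++ [w], by simpa using hp⟩ ≠ b
  · obtain ⟨p, hp, b, hb⟩ := h
    obtain ⟨n, rfl⟩ : ∃ n, c = n + 1 := Nat.exists_eq_succ_of_ne_zero b.pos.ne'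
    exact hasMonochromaticEdge_recEdges_of_children col hp
      (hasMonochromaticEdge_of_forall_ne hW hb)
  · push Not at h
    exact hasMonochromaticEdge_recEdges_of_forall_exists_child col (by omega) h

/-- The key inductive step of the recursive construction: if the hypergraph `E'`
(playing the role of `H_{c-1}`) on the branching set `W` is not `(c-1)`-colorable,
then the hypergraph `H_c` on `T(W, m)` — vertical hyperedges the root-to-leaf paths,
horizontal hyperedges the copies of `E'` on the sibling sets — is not `c`-colorable:
every `c`-coloring of its vertices contains a monochromatic hyperedge. -/
theorem stmt6 (m c : ℕ) (hm : 2 ≤ m) (hc : 2 < c)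
    (W : Type) (E' : Set (Set W))
    (hW : ∀ col' : W → Fin (c - 1), ∃ A ∈ E', ∃ b : Fin (c - 1), ∀ w ∈ A, col' w = b) :
    ∀ col : TreeW W m → Fin c,
      ∃ E ∈ recEdges W m E', ∃ b : Fin c, ∀ v ∈ E, col v = b :=
  stmt6_general m c hm W E' hW
end

section
/- Let C be a family of x-monotone bi-infinite curves in the plane such that any two curves intersect in at most t points, and let S be a finite point set. Then the hypergraph H(S,C), whose hyperedges are the subsets of S lying on or above some curve of C, is (AB)^{(t+2)/2}-free; in particular if every two curves cross at most twice (pseudo-parabolas), H(S,C) is ABAB-free. -/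
/-- The left-to-right order on points of the plane: by `x`-coordinate, ties broken by
`y`-coordinate. -/
def ptLT (p q : ℝ × ℝ) : Prop := p.1 < q.1 ∨ (p.1 = q.1 ∧ p.2 < q.2)

/-- Let `C` be a family of `x`-monotone bi-infinite curves (modelled as graphs of
continuous functions `ℝ → ℝ`) such that any two distinct curves intersect in at most
`t` points, and let `S` be a finite point set. Then the hypergraph `H(S, C)`, whose
hyperedges are the subsets of `S` lying on or above some curve of `C`, is
`(AB)^{(t+2)/2}`-free: no two curves `f`, `g` admit an alternating sequence of `t + 2`
points of `S` (increasing in the left-to-right order) lying alternately on or above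
`f` and strictly below `g`, and on or above `g` and strictly below `f`.
In particular, for `t = 2` (pseudo-parabolas) the hypergraph is ABAB-free. -/
theorem stmt7 (t : ℕ) (C : Set (ℝ → ℝ)) (S : Set (ℝ × ℝ)) (hS : S.Finite)
    (hcont : ∀ f ∈ C, Continuous f)
    (hint : ∀ f ∈ C, ∀ g ∈ C, f ≠ g →
      {x : ℝ | f x = g x}.Finite ∧ {x : ℝ | f x = g x}.ncard ≤ t) :
    ∀ f ∈ C, ∀ g ∈ C,
      ¬ ∃ s : Fin (t + 2) → ℝ × ℝ,
        (∀ i, s i ∈ S) ∧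
        (∀ i j, i < j → ptLT (s i) (s j)) ∧
        (∀ i, i.val % 2 = 0 → f (s i).1 ≤ (s i).2 ∧ ¬ g (s i).1 ≤ (s i).2) ∧
        (∀ i, i.val % 2 = 1 → g (s i).1 ≤ (s i).2 ∧ ¬ f (s i).1 ≤ (s i).2) := by
  intro f hf g hg ⟨s, hmem, horder, heven, hodd⟩
  set x : Fin (t + 2) → ℝ := fun i => (s i).1 with hx
  set h : ℝ → ℝ := fun u => f u - g u with hh
  have hhc : Continuous h := (hcont f hf).sub (hcont g hg)
  have hsign : ∀ i : Fin (t + 2),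
      (i.val % 2 = 0 → h (x i) < 0) ∧ (i.val % 2 = 1 → 0 < h (x i)) := by
    intro i
    constructor
    · intro h0
      obtain ⟨h1, h2⟩ := heven i h0
      have := lt_of_le_of_lt h1 (lt_of_not_ge h2)
      simp only [hh]; linarith
    · intro h1
      obtain ⟨h3, h4⟩ := hodd i h1
      have := lt_of_le_of_lt h3 (lt_of_not_ge h4)
      simp only [hh]; linarith
  have hfg : f ≠ g := by
    have := (hsign 0).1 rfl
    intro he
    have h2 : f (x 0) - g (x 0) < 0 := this
    rw [he] at h2; linarith
  obtain ⟨hfin, hcard⟩ := hint f hf g hg hfg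
  -- adjacent x's are strictly increasing
  have hadj : ∀ i : Fin (t + 1), x i.castSucc < x i.succ := by
    intro i
    have hlt : i.castSucc < i.succ := Fin.castSucc_lt_succ
    rcases horder _ _ hlt with hl | ⟨he, _⟩
    · exact hl
    · exfalso
      have hcs : (i.castSucc : Fin (t+2)).val = i.val := rfl
      have hsu : (i.succ : Fin (t+2)).val = i.val + 1 := rfl
      have hxe : x i.castSucc = x i.succ := he
      rcases Nat.even_or_odd i.val with ⟨k, hk⟩ | ⟨k, hk⟩
      · have h1 := (hsign i.castSucc).1 (by rw [hcs]; omega)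
        have h2 := (hsign i.succ).2 (by rw [hsu]; omega)
        rw [hxe] at h1; linarith
      · have h1 := (hsign i.castSucc).2 (by rw [hcs]; omega)
        have h2 := (hsign i.succ).1 (by rw [hsu]; omega)
        rw [hxe] at h1; linarith
  have hmono : StrictMono x := by
    have : ∀ i : Fin (t + 1), x (Fin.castSucc i) < x i.succ := hadj
    exact Fin.strictMono_iff_lt_succ.mpr this
  -- a zero of h strictly between each adjacent pair
  have hz : ∀ i : Fin (t + 1), ∃ z ∈ Set.Ioo (x i.castSucc) (x i.succ), h z = 0 := by
    intro i
    have hle : x i.castSucc ≤ x i.succ := (hadj i).le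
    have hco : ContinuousOn h (Set.Icc (x i.castSucc) (x i.succ)) := hhc.continuousOn
    rcases Nat.even_or_odd i.val with ⟨k, hk⟩ | ⟨k, hk⟩
    · have h1 := (hsign i.castSucc).1 (by show i.val % 2 = 0; omega)
      have h2 := (hsign i.succ).2 (by show (i.val + 1) % 2 = 1; omega)
      have := intermediate_value_Ioo hle hco (a := x i.castSucc) (b := x i.succ)
      have h0 : (0:ℝ) ∈ Set.Ioo (h (x i.castSucc)) (h (x i.succ)) := ⟨h1, h2⟩
      obtain ⟨z, hz1, hz2⟩ := this h0
      exact ⟨z, hz1, hz2⟩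
    · have h1 := (hsign i.castSucc).2 (by show i.val % 2 = 1; omega)
      have h2 := (hsign i.succ).1 (by show (i.val + 1) % 2 = 0; omega)
      have := intermediate_value_Ioo' hle hco (a := x i.castSucc) (b := x i.succ)
      have h0 : (0:ℝ) ∈ Set.Ioo (h (x i.succ)) (h (x i.castSucc)) := ⟨h2, h1⟩
      obtain ⟨z, hz1, hz2⟩ := this h0
      exact ⟨z, hz1, hz2⟩
  choose z hzmem hzero using hz
  -- z is strictly monotone hence injective
  have hzmono : StrictMono z := by
    intro i j hij
    calc z i < x i.succ := (hzmem i).2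
      _ ≤ x j.castSucc := hmono.monotone (Fin.succ_le_castSucc_iff.mpr hij)
      _ < z j := (hzmem j).1
  have hsub : Set.range z ⊆ {u : ℝ | f u = g u} := by
    rintro _ ⟨i, rfl⟩
    have := hzero i
    simp only [hh] at this
    simpa [sub_eq_zero] using this
  have hcard2 : (Set.range z).ncard = t + 1 := by
    rw [← Set.image_univ, Set.ncard_image_of_injective _ hzmono.injective, Set.ncard_univ]
    simp
  have := Set.ncard_le_ncard hsub hfin
  omega
end

section
/- Every finite (AB)^t-free hypergraph (t ≥ 1 half an integer) can be realized by a finite point set S on a horizontal line and a family of x-monotone bi-infinite curves such that each hyperedge equals the set of points of S lying on or above some curve, and any two curves intersect in at most 2t−2 points. -/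
/-!
Place the vertices at `0, 1, …, n-1` and let the curve of a hyperedge `A` be the
piecewise-linear interpolation of values `v_A(j)`, where `v_A(j)` encodes, in base `1/4`, the
`±1` membership signs of `A` read in the order `j, j-1, …, 0, j+1, j+2, …`. Then `v_A(j) < 0`
iff `j ∈ A`, and `v_A(j) - v_B(j)` has the sign dictated by the first position of `A ∆ B` in
that order: the last one `≤ j`, or the first one if there is none. This key position is
monotone in `j`, so every sign change of `v_A - v_B` advances it to a position of the other
type, and `2t - 1` sign changes would produce an alternation `a₁ < b₁ < a₂ < …` of length
`2t`. Two interpolated curves cross at most once per sign change.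
-/

open Finset
open scoped symmDiff

noncomputable section

/-- The interpolation of `v 0, …, v N` at `0, …, N`, extended by constants outside `[0, N]`. -/
def pwLinear (N : ℕ) (v : ℕ → ℝ) (x : ℝ) : ℝ :=
  v 0 + ∑ i ∈ range N, (v (i + 1) - v i) * max 0 (min 1 (x - i))

namespace pwLinear

variable {N : ℕ} {v w : ℕ → ℝ} {x : ℝ}

theorem continuous : Continuous (pwLinear N v) := by
  unfold pwLinear
  fun_prop

theorem sub_apply : pwLinear N (v - w) x = pwLinear N v x - pwLinear N w x := by
  simp only [pwLinear, Pi.sub_apply, sub_mul, sum_sub_distrib]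
  ring

theorem of_nonpos (hx : x ≤ 0) : pwLinear N v x = v 0 := by
  have h (i : ℕ) : max 0 (min 1 (x - i)) = 0 := by
    have : x - i ≤ 0 := by linarith [(Nat.cast_nonneg i : (0 : ℝ) ≤ i)]
    simp [min_le_of_right_le this]
  simp [pwLinear, h]

theorem of_le (hx : N ≤ x) : pwLinear N v x = v N := by
  have h : ∀ i ∈ range N, max 0 (min 1 (x - i)) = 1 := fun i hi => by
    have : (i : ℝ) + 1 ≤ N := by exact_mod_cast mem_range.1 hi
    rw [min_eq_left (by linarith), max_eq_right zero_le_one]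
  rw [pwLinear, sum_congr rfl fun i hi => by rw [h i hi, mul_one], sum_range_sub]
  ring

theorem natCast_add {k : ℕ} (hk : k < N) {t : ℝ} (ht₀ : 0 ≤ t) (ht₁ : t ≤ 1) :
    pwLinear N v (k + t) = v k + t * (v (k + 1) - v k) := by
  have below : ∀ i ∈ range k, max 0 (min 1 (k + t - i)) = 1 := fun i hi => by
    have : (i : ℝ) + 1 ≤ k := by exact_mod_cast mem_range.1 hi
    rw [min_eq_left (by linarith), max_eq_right zero_le_one]
  have above : ∀ i ∈ Ico (k + 1) N, max 0 (min 1 (k + t - i)) = 0 := fun i hi => by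
    have : (k : ℝ) + 1 ≤ i := by exact_mod_cast (mem_Ico.1 hi).1
    rw [min_eq_right (by linarith), max_eq_left (by linarith)]
  rw [pwLinear, ← sum_range_add_sum_Ico _ hk, sum_range_succ,
    sum_congr rfl fun i hi => by rw [below i hi, mul_one], sum_range_sub,
    sum_eq_zero fun i hi => by rw [above i hi, mul_zero]]
  rw [add_sub_cancel_left, min_eq_right ht₁, max_eq_right ht₀]
  ring

theorem natCast {k : ℕ} (hk : k ≤ N) : pwLinear N v k = v k := by
  rcases hk.lt_or_eq with hk | rfl
  · simpa using natCast_add (v := v) hk le_rfl zero_le_one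
  · exact of_le le_rfl

theorem setOf_eq_zero_subset (hw : ∀ k ≤ N, w k ≠ 0) :
    {x | pwLinear N w x = 0} ⊆
      ((range N).filter (fun k : ℕ => w k * w (k + 1) < 0)).image
        (fun k : ℕ => (k : ℝ) + w k / (w k - w (k + 1))) := by
  intro x (hx : pwLinear N w x = 0)
  have hx₀ : 0 < x := lt_of_not_ge fun h => hw 0 (Nat.zero_le _) (by rwa [of_nonpos h] at hx)
  have hxN : x < N := lt_of_not_ge fun h => hw N le_rfl (by rwa [of_le h] at hx)
  set k := ⌊x⌋₊
  set t := x - k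
  have hk : k < N := (Nat.floor_lt hx₀.le).2 hxN
  have ht₀ : 0 ≤ t := sub_nonneg.2 (Nat.floor_le hx₀.le)
  have ht₁ : t < 1 := by linarith [Nat.lt_floor_add_one x]
  have hval : w k + t * (w (k + 1) - w k) = 0 := by
    rw [← natCast_add hk ht₀ ht₁.le, add_sub_cancel, hx]
  have hwk := hw k hk.le
  have ht : 0 < t := ht₀.lt_of_ne fun h => hwk (by simpa [← h] using hval)
  have hsign : w k * w (k + 1) < 0 := by
    have : t * (w k * w (k + 1)) = -(1 - t) * w k ^ 2 := by linear_combination w k * hval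
    nlinarith [sq_pos_of_ne_zero hwk]
  have hden : w k - w (k + 1) ≠ 0 := fun h => by
    rw [show w (k + 1) = w k by linarith] at hsign
    nlinarith [mul_self_nonneg (w k)]
  refine mem_image.2 ⟨k, mem_filter.2 ⟨mem_range.2 hk, hsign⟩, ?_⟩
  rw [show w k / (w k - w (k + 1)) = t by field_simp; linarith]
  ring

theorem zeros_finite_and_ncard_le (hw : ∀ k ≤ N, w k ≠ 0) :
    {x | pwLinear N w x = 0}.Finite ∧
      {x | pwLinear N w x = 0}.ncard ≤ #((range N).filter (fun k : ℕ => w k * w (k + 1) < 0)) := by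
  have hsub := setOf_eq_zero_subset hw
  refine ⟨(finite_toSet _).subset hsub, ?_⟩
  calc _ ≤ (_ : Set ℝ).ncard := Set.ncard_le_ncard hsub (finite_toSet _)
    _ ≤ _ := by rw [Set.ncard_coe_finset]; exact card_image_le

end pwLinear

theorem sum_mul_inv_four_pow_pos {d : ℕ → ℝ} {L i₀ : ℕ} (hi₀ : i₀ < L)
    (hzero : ∀ i < i₀, d i = 0) (hpos : 0 < d i₀) (hle : ∀ i, |d i| ≤ d i₀) :
    0 < ∑ i ∈ range L, d i * 4⁻¹ ^ i := by
  have htail : |∑ i ∈ Ico (i₀ + 1) L, d i * 4⁻¹ ^ i| ≤ d i₀ * 4⁻¹ ^ i₀ / 3 :=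
    calc |∑ i ∈ Ico (i₀ + 1) L, d i * 4⁻¹ ^ i|
        ≤ ∑ i ∈ Ico (i₀ + 1) L, d i₀ * (4⁻¹ : ℝ) ^ i := by
          refine (abs_sum_le_sum_abs _ _).trans (sum_le_sum fun i _ => ?_)
          rw [abs_mul, abs_of_pos (by positivity : (0 : ℝ) < 4⁻¹ ^ i)]
          exact mul_le_mul_of_nonneg_right (hle i) (by positivity)
      _ ≤ d i₀ * ((4⁻¹ : ℝ) ^ (i₀ + 1) / (1 - 4⁻¹)) := by
          rw [← mul_sum]
          exact mul_le_mul_of_nonneg_left (geom_sum_Ico_le_of_lt_one (by norm_num) (by norm_num))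
            hpos.le
      _ = d i₀ * 4⁻¹ ^ i₀ / 3 := by ring
  rw [← sum_range_add_sum_Ico _ hi₀.le, sum_eq_zero fun i hi => by rw [hzero i (mem_range.1 hi),
    zero_mul], zero_add, sum_eq_sum_Ico_succ_bot hi₀]
  have : 0 < d i₀ * (4⁻¹ : ℝ) ^ i₀ := by positivity
  linarith [(abs_le.1 htail).1]

def memSign (A : Finset ℕ) (k : ℕ) : ℝ := if k ∈ A then -1 else 1

theorem memSign_of_mem {A : Finset ℕ} {k : ℕ} (h : k ∈ A) : memSign A k = -1 := if_pos h

theorem memSign_of_notMem {A : Finset ℕ} {k : ℕ} (h : k ∉ A) : memSign A k = 1 := if_neg h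

theorem abs_memSign (A : Finset ℕ) (k : ℕ) : |memSign A k| = 1 := by
  unfold memSign; split_ifs <;> norm_num

def scanOrder (j i : ℕ) : ℕ := if i ≤ j then j - i else i

@[simp]
theorem scanOrder_zero (j : ℕ) : scanOrder j 0 = j := by simp [scanOrder]

theorem scanOrder_scanOrder (j i : ℕ) : scanOrder j (scanOrder j i) = i := by
  unfold scanOrder; split_ifs <;> omega

def scanValue (L : ℕ) (A : Finset ℕ) (j : ℕ) : ℝ :=
  ∑ i ∈ range L, memSign A (scanOrder j i) * 4⁻¹ ^ i

theorem scanValue_nonpos_iff {L j : ℕ} (hj : j < L) (A : Finset ℕ) :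
    scanValue L A j ≤ 0 ↔ j ∈ A := by
  have hL : 0 < L := by omega
  by_cases hjA : j ∈ A
  · have : 0 < ∑ i ∈ range L, -memSign A (scanOrder j i) * 4⁻¹ ^ i :=
      sum_mul_inv_four_pow_pos hL (by simp) (by simp [memSign_of_mem hjA])
        fun i => by simp [abs_memSign, memSign_of_mem hjA]
    simp only [neg_mul, sum_neg_distrib, neg_pos] at this
    exact iff_of_true this.le hjA
  · have : 0 < ∑ i ∈ range L, memSign A (scanOrder j i) * 4⁻¹ ^ i :=
      sum_mul_inv_four_pow_pos hL (by simp) (by simp [memSign_of_notMem hjA])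
        fun i => by simp [abs_memSign, memSign_of_notMem hjA]
    exact iff_of_false (not_le.2 this) hjA

theorem memSign_eq_of_notMem_symmDiff {A B : Finset ℕ} {k : ℕ} (h : k ∉ A ∆ B) :
    memSign A k = memSign B k := by
  rw [mem_symmDiff] at h
  by_cases hA : k ∈ A
  · rw [memSign_of_mem hA, memSign_of_mem (by tauto)]
  · rw [memSign_of_notMem hA, memSign_of_notMem (by tauto)]

section keyIndex

variable {D : Finset ℕ} (hD : D.Nonempty)

/-- The first element of `D` in `scanOrder j`: the largest one `≤ j`, else the least one. -/
def keyIndex (j : ℕ) : ℕ :=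
  (insert (D.min' hD) (D.filter (· ≤ j))).max' (insert_nonempty _ _)

theorem keyIndex_mem (j : ℕ) : keyIndex hD j ∈ D := by
  rcases mem_insert.1 (max'_mem _ _ : keyIndex hD j ∈ _) with h | h
  · rw [keyIndex, h]; exact min'_mem D hD
  · exact (mem_filter.1 h).1

theorem keyIndex_monotone : Monotone (keyIndex hD) := fun _ _ hij =>
  max'_subset _ <| insert_subset_insert _ fun _ hk =>
    mem_filter.2 ⟨(mem_filter.1 hk).1, (mem_filter.1 hk).2.trans hij⟩

theorem scanOrder_keyIndex_le (j : ℕ) {k : ℕ} (hk : k ∈ D) :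
    scanOrder j (keyIndex hD j) ≤ scanOrder j k := by
  have hmin : D.min' hD ≤ k := min'_le D k hk
  have hlast : k ≤ j → k ≤ keyIndex hD j := fun h =>
    le_max' _ k (mem_insert_of_mem (mem_filter.2 ⟨hk, h⟩))
  have hcases : keyIndex hD j = D.min' hD ∨ keyIndex hD j ≤ j := by
    rcases mem_insert.1 (max'_mem _ _ : keyIndex hD j ∈ _) with h | h
    · exact .inl h
    · exact .inr (mem_filter.1 h).2
  unfold scanOrder
  split_ifs <;> omega

theorem scanValue_lt_of_keyIndex_mem {L j : ℕ} {A B : Finset ℕ} (hAB : A ∆ B = D)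
    (hDL : ∀ k ∈ D, k < L) (hj : j < L) (hκ : keyIndex hD j ∈ A) :
    scanValue L A j < scanValue L B j := by
  subst hAB
  have hκB : keyIndex hD j ∉ B := by
    have := mem_symmDiff.1 (keyIndex_mem hD j)
    tauto
  have hfirst : ∀ i < scanOrder j (keyIndex hD j), scanOrder j i ∉ A ∆ B := fun i hi hiD => by
    have := scanOrder_keyIndex_le hD j hiD
    rw [scanOrder_scanOrder] at this
    omega
  have hκL : scanOrder j (keyIndex hD j) < L := by
    have := hDL _ (keyIndex_mem hD j)
    unfold scanOrder; split_ifs <;> omega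
  have key : 0 < ∑ i ∈ range L,
      (memSign B (scanOrder j i) - memSign A (scanOrder j i)) * 4⁻¹ ^ i := by
    refine sum_mul_inv_four_pow_pos hκL
      (fun i hi => by
        rw [memSign_eq_of_notMem_symmDiff (A := A) (B := B) (hfirst i hi), sub_self]) ?_ ?_
    · rw [scanOrder_scanOrder, memSign_of_mem hκ, memSign_of_notMem hκB]; norm_num
    · intro i
      rw [scanOrder_scanOrder, memSign_of_mem hκ, memSign_of_notMem hκB]
      calc _ ≤ |memSign B (scanOrder j i)| + |memSign A (scanOrder j i)| := abs_sub _ _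
        _ = 1 - -1 := by rw [abs_memSign, abs_memSign]; norm_num
  simp only [sub_mul, sum_sub_distrib] at key
  exact sub_pos.1 key

theorem scanValue_lt_iff {L j : ℕ} {A B : Finset ℕ}
    (hAB : A ∆ B = D) (hDL : ∀ k ∈ D, k < L) (hj : j < L) :
    scanValue L A j < scanValue L B j ↔ keyIndex hD j ∈ A := by
  subst hAB
  refine ⟨fun hlt => ?_, scanValue_lt_of_keyIndex_mem hD rfl hDL hj⟩
  by_contra hA
  have hB : keyIndex hD j ∈ B := by
    have := mem_symmDiff.1 (keyIndex_mem hD j)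
    tauto
  exact hlt.not_gt (scanValue_lt_of_keyIndex_mem hD (symmDiff_comm B A) hDL hj hB)

end keyIndex

theorem scanValue_ne {L j : ℕ} {A B : Finset ℕ} (hAB : A ≠ B) (hDL : ∀ k ∈ A ∆ B, k < L)
    (hj : j < L) : scanValue L A j ≠ scanValue L B j := by
  have hD := symmDiff_nonempty.2 hAB
  intro h
  have hA := (scanValue_lt_iff hD rfl hDL hj).not.1 h.not_lt
  have hB := (scanValue_lt_iff hD (symmDiff_comm B A) hDL hj).not.1 h.symm.not_lt
  have := mem_symmDiff.1 (keyIndex_mem hD j)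
  tauto

def changeCount (P : ℕ → Prop) [DecidablePred P] (N : ℕ) : ℕ :=
  #{k ∈ range N | ¬(P k ↔ P (k + 1))}

theorem changeCount_succ (P : ℕ → Prop) [DecidablePred P] (N : ℕ) :
    changeCount P (N + 1) = changeCount P N + if P N ↔ P (N + 1) then 0 else 1 := by
  rw [changeCount, range_add_one, filter_insert]
  by_cases h : P N ↔ P (N + 1)
  · simp only [h, not_true_eq_false, if_false, if_true, add_zero]; rfl
  · rw [if_pos h, if_neg h, card_insert_of_notMem (by simp)]; rfl

theorem Monotone.exists_alternating {α : Type*} [LinearOrder α] {g : ℕ → α} (hg : Monotone g)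
    (P : α → Prop) [DecidablePred P] (N : ℕ) :
    ∃ f : ℕ → α, (∀ i, f i ∈ Set.range g) ∧
      (∀ i < changeCount (fun k => P (g k)) N, f i < f (i + 1)) ∧
      (∀ i ≤ changeCount (fun k => P (g k)) N, (P (f i) ↔ (Even i ↔ P (g 0)))) ∧
      -- the induction invariant: the last term lags behind `g N` but has its type
      f (changeCount (fun k => P (g k)) N) ≤ g N ∧
      (P (f (changeCount (fun k => P (g k)) N)) ↔ P (g N)) := by
  induction N with
  | zero =>
    refine ⟨fun _ => g 0, fun _ => ⟨0, rfl⟩, by simp [changeCount], ?_, le_rfl, Iff.rfl⟩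
    simp [changeCount]
  | succ N ih =>
    obtain ⟨f, hrange, hmono, hpar, hle, hlast⟩ := ih
    have hstep := hle.trans (hg N.le_succ)
    rw [changeCount_succ]
    by_cases hsame : P (g N) ↔ P (g (N + 1))
    · rw [if_pos hsame, add_zero]
      exact ⟨f, hrange, hmono, hpar, hstep, hlast.trans hsame⟩
    rw [if_neg hsame]
    set m := changeCount (fun k => P (g k)) N
    have hlt : f m < g (N + 1) := hstep.lt_of_ne fun h => hsame (h ▸ hlast).symm
    refine ⟨fun i => if i ≤ m then f i else g (N + 1), fun i => ?_, fun i hi => ?_,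
      fun i hi => ?_, by simp, by simp⟩
    · dsimp only
      split_ifs
      exacts [hrange i, ⟨N + 1, rfl⟩]
    · rcases (Nat.lt_succ_iff.1 hi).lt_or_eq with hi | rfl
      · simpa [hi.le, Nat.succ_le_of_lt hi] using hmono i hi
      · simpa using hlt
    · rcases hi.lt_or_eq with hi | rfl
      · simpa [Nat.le_of_lt_succ hi] using hpar i (Nat.le_of_lt_succ hi)
      · have := hpar m le_rfl
        simp only [Nat.not_succ_le_self, if_false, Nat.even_add_one]
        tauto

theorem mul_neg_iff_of_ne_zero {R : Type*} [Ring R] [LinearOrder R] [IsStrictOrderedRing R]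
    {a b : R} (ha : a ≠ 0) (hb : b ≠ 0) :
    a * b < 0 ↔ ¬(a < 0 ↔ b < 0) := by
  rw [mul_neg_iff]
  rcases ha.lt_or_gt with ha | ha <;> rcases hb.lt_or_gt with hb | hb <;>
    simp [ha, hb, ha.not_gt, hb.not_gt]

theorem lt_of_mem_map_valEmbedding {n k : ℕ} {A : Finset (Fin n)}
    (h : k ∈ A.map Fin.valEmbedding) : k < n := by
  obtain ⟨i, -, rfl⟩ := mem_map.1 h
  exact i.isLt

def HasAlternation (s : ℕ) {n : ℕ} (A B : Finset (Fin n)) : Prop :=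
  ∃ f : Fin s → Fin n, StrictMono f ∧
    (∀ i, i.val % 2 = 0 → f i ∈ A \ B) ∧ (∀ i, i.val % 2 = 1 → f i ∈ B \ A)

theorem hasAlternation_of_nat {s n : ℕ} {A B : Finset (Fin n)} {f : ℕ → ℕ}
    (hmono : ∀ i, i + 1 < s → f i < f (i + 1))
    (hmem : ∀ i < s, f i ∈ A.map Fin.valEmbedding ∆ B.map Fin.valEmbedding)
    (hpar : ∀ i < s, (f i ∈ A.map Fin.valEmbedding ↔ Even i)) :
    HasAlternation s A B := by
  have hlt : ∀ i < s, f i < n := fun i hi =>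
    (mem_symmDiff.1 (hmem i hi)).elim (lt_of_mem_map_valEmbedding ·.1)
      (lt_of_mem_map_valEmbedding ·.1)
  have hstrict : StrictMonoOn f (Set.Iic (s - 1)) :=
    strictMonoOn_Iic_of_lt_succ fun i hi => by
      rw [Order.succ_eq_add_one]; exact hmono i (by omega)
  have hval (C : Finset (Fin n)) (i : Fin s) :
      (⟨f i, hlt i i.isLt⟩ : Fin n) ∈ C ↔ f i ∈ C.map Fin.valEmbedding :=
    (mem_map' Fin.valEmbedding).symm
  refine ⟨fun i => ⟨f i, hlt i i.isLt⟩, fun a b hab => ?_, fun i hi => ?_, fun i hi => ?_⟩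
  · exact hstrict (Set.mem_Iic.2 (by omega)) (Set.mem_Iic.2 (by omega)) hab
  all_goals
    have := mem_symmDiff.1 (hmem i i.isLt)
    have := hpar i i.isLt
    rw [mem_sdiff, hval, hval]
  · rw [← Nat.even_iff] at hi
    tauto
  · rw [← Nat.odd_iff, ← Nat.not_even_iff_odd] at hi
    tauto

theorem changeCount_keyIndex_le {s n : ℕ} {A B : Finset (Fin n)}
    (hD : (A.map Fin.valEmbedding ∆ B.map Fin.valEmbedding).Nonempty)
    (hfreeAB : ¬HasAlternation s A B) (hfreeBA : ¬HasAlternation s B A) (N : ℕ) :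
    changeCount (fun k => keyIndex hD k ∈ A.map Fin.valEmbedding) N ≤ s - 2 := by
  by_contra! hlarge
  obtain ⟨f, hrange, hmono, hpar, -⟩ :=
    (keyIndex_monotone hD).exists_alternating (· ∈ A.map Fin.valEmbedding) N
  have hmem : ∀ i, f i ∈ A.map Fin.valEmbedding ∆ B.map Fin.valEmbedding := fun i => by
    obtain ⟨k, hk⟩ := hrange i
    exact hk ▸ keyIndex_mem hD k
  have hmono' : ∀ i, i + 1 < s → f i < f (i + 1) := fun i hi => hmono i (by omega)
  by_cases h₀ : keyIndex hD 0 ∈ A.map Fin.valEmbedding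
  · exact hfreeAB <| hasAlternation_of_nat hmono' (fun i _ => hmem i)
      fun i hi => by simpa only [h₀, iff_true] using hpar i (by omega)
  · refine hfreeBA <| hasAlternation_of_nat hmono' (fun i _ => symmDiff_comm (A.map Fin.valEmbedding) _ ▸ hmem i)
      fun i hi => ?_
    have := hpar i (by omega)
    have := mem_symmDiff.1 (hmem i)
    tauto

theorem crossings_le {s n : ℕ} {A B : Finset (Fin n)} (hAB : A ≠ B)
    (hfreeAB : ¬HasAlternation s A B) (hfreeBA : ¬HasAlternation s B A) :
    {x | pwLinear (n - 1) (scanValue n (A.map Fin.valEmbedding)) x =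
        pwLinear (n - 1) (scanValue n (B.map Fin.valEmbedding)) x}.Finite ∧
      {x | pwLinear (n - 1) (scanValue n (A.map Fin.valEmbedding)) x =
        pwLinear (n - 1) (scanValue n (B.map Fin.valEmbedding)) x}.ncard ≤ s - 2 := by
  set A' := A.map Fin.valEmbedding
  set B' := B.map Fin.valEmbedding
  have hAB' : A' ≠ B' := (map_injective _).ne hAB
  have hD : (A' ∆ B').Nonempty := symmDiff_nonempty.2 hAB'
  have hDn : ∀ k ∈ A' ∆ B', k < n := fun k hk =>
    (mem_symmDiff.1 hk).elim (lt_of_mem_map_valEmbedding ·.1) (lt_of_mem_map_valEmbedding ·.1)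
  have hn : 0 < n := Nat.zero_lt_of_lt (hDn _ hD.choose_spec)
  set w := scanValue n A' - scanValue n B'
  have hw : ∀ k ≤ n - 1, w k ≠ 0 := fun k hk =>
    sub_ne_zero.2 (scanValue_ne hAB' hDn (by omega))
  have hsign : ∀ k ≤ n - 1, (w k < 0 ↔ keyIndex hD k ∈ A') := fun k hk =>
    sub_neg.trans (scanValue_lt_iff hD rfl hDn (by omega))
  have hcount : #{k ∈ range (n - 1) | w k * w (k + 1) < 0} =
      changeCount (fun k => keyIndex hD k ∈ A') (n - 1) := by
    refine congrArg card (filter_congr fun k hk => ?_)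
    have hk := mem_range.1 hk
    rw [mul_neg_iff_of_ne_zero (hw k (by omega)) (hw (k + 1) (by omega)), hsign k (by omega),
      hsign (k + 1) (by omega)]
  have hzeros : {x | pwLinear (n - 1) (scanValue n A') x = pwLinear (n - 1) (scanValue n B') x} =
      {x | pwLinear (n - 1) w x = 0} := by
    ext x
    change _ = _ ↔ _ = 0
    rw [pwLinear.sub_apply, sub_eq_zero]
  obtain ⟨hfin, hcard⟩ := pwLinear.zeros_finite_and_ncard_le hw
  rw [hzeros]
  exact ⟨hfin, hcard.trans (hcount ▸ changeCount_keyIndex_le hD hfreeAB hfreeBA _)⟩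

end

theorem stmt8_general (s n : ℕ) (E : Set (Finset (Fin n)))
    (hfree : ∀ A ∈ E, ∀ B ∈ E,
      ¬ ∃ f : Fin s → Fin n, StrictMono f ∧
        (∀ i, i.val % 2 = 0 → f i ∈ A \ B) ∧
        (∀ i, i.val % 2 = 1 → f i ∈ B \ A)) :
    ∃ (pts : Fin n → ℝ) (curve : Finset (Fin n) → ℝ → ℝ),
      StrictMono pts ∧
      (∀ A ∈ E, Continuous (curve A)) ∧
      (∀ A ∈ E, ∀ i : Fin n, i ∈ A ↔ curve A (pts i) ≤ 0) ∧
      (∀ A ∈ E, ∀ B ∈ E, A ≠ B →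
        {x : ℝ | curve A x = curve B x}.Finite ∧
        {x : ℝ | curve A x = curve B x}.ncard ≤ s - 2) := by
  refine ⟨fun i => ((i : ℕ) : ℝ),
    fun A => pwLinear (n - 1) (scanValue n (A.map Fin.valEmbedding)),
    fun a b hab => Nat.cast_lt.2 hab, fun A _ => pwLinear.continuous, fun A _ i => ?_,
    fun A hA B hB hAB => crossings_le hAB (hfree A hA B hB) (hfree B hB A hA)⟩
  change i ∈ A ↔ pwLinear _ _ ((i : ℕ) : ℝ) ≤ 0
  rw [pwLinear.natCast (by omega), scanValue_nonpos_iff i.isLt,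
    show (i : ℕ) = Fin.valEmbedding i from rfl, mem_map']

/-- Every finite `(AB)^t`-free hypergraph (here `s = 2t` is an integer, `t ≥ 1` half an
integer) on the ordered vertex set `Fin n` can be realized by a finite point set on a
horizontal line (points `(pts i, 0)` with `pts` strictly increasing) and a family of
`x`-monotone bi-infinite curves (graphs of continuous functions `ℝ → ℝ`) such that each
hyperedge equals the set of points lying on or above its curve, and any two curves of
distinct hyperedges intersect in at most `2t - 2 = s - 2` points. -/
theorem stmt8 (s n : ℕ) (hs : 2 ≤ s) (E : Set (Finset (Fin n)))
    (hfree : ∀ A ∈ E, ∀ B ∈ E,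
      ¬ ∃ f : Fin s → Fin n, StrictMono f ∧
        (∀ i, i.val % 2 = 0 → f i ∈ A \ B) ∧
        (∀ i, i.val % 2 = 1 → f i ∈ B \ A)) :
    ∃ (pts : Fin n → ℝ) (curve : Finset (Fin n) → ℝ → ℝ),
      StrictMono pts ∧
      (∀ A ∈ E, Continuous (curve A)) ∧
      (∀ A ∈ E, ∀ i : Fin n, i ∈ A ↔ curve A (pts i) ≤ 0) ∧
      (∀ A ∈ E, ∀ B ∈ E, A ≠ B →
        {x : ℝ | curve A x = curve B x}.Finite ∧
        {x : ℝ | curve A x = curve B x}.ncard ≤ s - 2) :=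
  stmt8_general s n E hfree
end

section
/- Any family C of x-monotone bi-infinite pairwise at-most-twice-crossing curves (pseudo-parabolas) together with a finite point set S can be replaced by an 'even' family C' (any two curves disjoint or crossing exactly twice, equivalently having the same vertical order at −∞ and +∞) such that the hypergraphs H(S,C) and H(S,C') are isomorphic. -/
open Finset in
noncomputable def pl (ts : ℕ → ℝ) (N : ℕ) (v : ℕ → ℝ) (x : ℝ) : ℝ :=
  v 0 + ∑ k ∈ Finset.range N, ((v (k+1) - v k) / (ts (k+1) - ts k)) * (min (max x (ts k)) (ts (k+1)) - ts k)

lemma pl_continuous (ts : ℕ → ℝ) (N : ℕ) (v : ℕ → ℝ) : Continuous (pl ts N v) := by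
  unfold pl
  refine continuous_const.add (continuous_finset_sum _ (fun k _ => ?_))
  exact continuous_const.mul (((continuous_id.max continuous_const).min continuous_const).sub continuous_const)

lemma pl_left (ts : ℕ → ℝ) (hts : StrictMono ts) (N : ℕ) (v : ℕ → ℝ) (x : ℝ) (hx : x ≤ ts 0) :
    pl ts N v x = v 0 := by
  unfold pl
  rw [Finset.sum_eq_zero, add_zero]
  intro k _
  have h1 : x ≤ ts k := hx.trans (hts.monotone (Nat.zero_le k))
  have h2 : ts k ≤ ts (k+1) := (hts (Nat.lt_succ_self k)).le
  rw [max_eq_right h1, min_eq_left h2, sub_self, mul_zero]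

lemma pl_right (ts : ℕ → ℝ) (hts : StrictMono ts) (N : ℕ) (v : ℕ → ℝ) (x : ℝ) (hx : ts N ≤ x) :
    pl ts N v x = v N := by
  unfold pl
  rw [Finset.sum_congr rfl (fun k hk => ?_), Finset.sum_range_sub v]
  · ring
  · have hk := Finset.mem_range.mp hk
    have h1 : ts k ≤ x := (hts.monotone (Nat.le_of_lt hk)).trans hx
    have h2 : ts (k+1) ≤ x := (hts.monotone hk).trans hx
    have h3 : ts k < ts (k+1) := hts (Nat.lt_succ_self k)
    have h4 : ts (k+1) - ts k ≠ 0 := sub_ne_zero.mpr h3.ne'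
    rw [max_eq_left h1, min_eq_right h2]
    field_simp

lemma pl_eval (ts : ℕ → ℝ) (hts : StrictMono ts) (N : ℕ) (v : ℕ → ℝ) (j : ℕ) (hj : j < N)
    (x : ℝ) (h1 : ts j ≤ x) (h2 : x ≤ ts (j+1)) :
    pl ts N v x = v j + (v (j+1) - v j) / (ts (j+1) - ts j) * (x - ts j) := by
  unfold pl
  rw [← Finset.sum_range_add_sum_Ico _ (Nat.succ_le_of_lt hj)]
  have hIco : ∑ k ∈ Finset.Ico (j+1) N, ((v (k+1) - v k) / (ts (k+1) - ts k)) * (min (max x (ts k)) (ts (k+1)) - ts k) = 0 := by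
    apply Finset.sum_eq_zero
    intro k hk
    have hk1 : j + 1 ≤ k := (Finset.mem_Ico.mp hk).1
    have hxk : x ≤ ts k := h2.trans (hts.monotone hk1)
    have hkk : ts k ≤ ts (k+1) := (hts (Nat.lt_succ_self k)).le
    rw [max_eq_right hxk, min_eq_left hkk, sub_self, mul_zero]
  rw [hIco, add_zero, Finset.sum_range_succ]
  have hterm : ((v (j+1) - v j) / (ts (j+1) - ts j)) * (min (max x (ts j)) (ts (j+1)) - ts j)
      = (v (j+1) - v j) / (ts (j+1) - ts j) * (x - ts j) := by
    rw [max_eq_left h1, min_eq_left h2]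
  rw [hterm]
  have hsum : ∑ k ∈ Finset.range j, ((v (k+1) - v k) / (ts (k+1) - ts k)) * (min (max x (ts k)) (ts (k+1)) - ts k) = v j - v 0 := by
    rw [Finset.sum_congr rfl (fun k hk => ?_), Finset.sum_range_sub v]
    have hk := Finset.mem_range.mp hk
    have hxk : ts k ≤ x := (hts.monotone (Nat.le_of_lt hk)).trans h1
    have hxk1 : ts (k+1) ≤ x := (hts.monotone (Nat.succ_le_of_lt hk)).trans h1
    have h3 : ts k < ts (k+1) := hts (Nat.lt_succ_self k)
    have h4 : ts (k+1) - ts k ≠ 0 := sub_ne_zero.mpr h3.ne'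
    rw [max_eq_left hxk, min_eq_right hxk1]
    field_simp
  rw [hsum]
  ring

lemma pl_node (ts : ℕ → ℝ) (hts : StrictMono ts) (N : ℕ) (v : ℕ → ℝ) (j : ℕ) (hj : j ≤ N) :
    pl ts N v (ts j) = v j := by
  rcases lt_or_eq_of_le hj with h | h
  · rw [pl_eval ts hts N v j h (ts j) le_rfl (hts (Nat.lt_succ_self j)).le]
    ring
  · subst h; exact pl_right ts hts _ v (ts j) le_rfl

lemma pl_sub (ts : ℕ → ℝ) (N : ℕ) (v w : ℕ → ℝ) (x : ℝ) :
    pl ts N v x - pl ts N w x = pl ts N (fun k => v k - w k) x := by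
  unfold pl
  have key : ∑ k ∈ Finset.range N, (((fun k => v k - w k) (k+1) - (fun k => v k - w k) k) / (ts (k+1) - ts k)) * (min (max x (ts k)) (ts (k+1)) - ts k)
      = (∑ k ∈ Finset.range N, ((v (k+1) - v k) / (ts (k+1) - ts k)) * (min (max x (ts k)) (ts (k+1)) - ts k))
      - ∑ k ∈ Finset.range N, ((w (k+1) - w k) / (ts (k+1) - ts k)) * (min (max x (ts k)) (ts (k+1)) - ts k) := by
    rw [← Finset.sum_sub_distrib]
    apply Finset.sum_congr rfl
    intro k _
    simp only
    rw [show (v (k+1) - w (k+1)) - (v k - w k) = (v (k+1) - v k) - (w (k+1) - w k) by ring,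
      sub_div, sub_mul]
  simp only at key ⊢
  rw [key]
  ring

lemma pl_seg_ne (ts : ℕ → ℝ) (hts : StrictMono ts) (N : ℕ) (v : ℕ → ℝ) (j : ℕ) (hj : j < N)
    (hsame : (0 < v j) ↔ (0 < v (j+1))) (hne0 : v j ≠ 0) (hne1 : v (j+1) ≠ 0)
    (x : ℝ) (h1 : ts j ≤ x) (h2 : x ≤ ts (j+1)) : pl ts N v x ≠ 0 := by
  rw [pl_eval ts hts N v j hj x h1 h2]
  have hd : (0:ℝ) < ts (j+1) - ts j := sub_pos.mpr (hts (Nat.lt_succ_self j))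
  set r := (x - ts j) / (ts (j+1) - ts j) with hr
  have hr0 : 0 ≤ r := div_nonneg (by linarith) hd.le
  have hr1 : r ≤ 1 := (div_le_one hd).mpr (by linarith)
  have hform : v j + (v (j+1) - v j) / (ts (j+1) - ts j) * (x - ts j) = v j * (1 - r) + v (j+1) * r := by
    rw [hr]; field_simp; ring
  rw [hform]
  intro heq
  rcases lt_or_gt_of_ne hne0 with hneg | hpos
  · have hneg1 : v (j+1) < 0 := by
      rcases lt_or_gt_of_ne hne1 with h | h
      · exact h
      · exact absurd (hsame.mpr h) (by linarith)
    have e1 : v j * (1 - r) ≤ 0 := mul_nonpos_iff.mpr (Or.inr ⟨hneg.le, by linarith⟩)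
    have e2 : v (j+1) * r ≤ 0 := mul_nonpos_iff.mpr (Or.inr ⟨hneg1.le, hr0⟩)
    have e1' : v j * (1 - r) = 0 := le_antisymm e1 (by linarith)
    have e2' : v (j+1) * r = 0 := by linarith
    rcases mul_eq_zero.mp e1' with h | h
    · exact hne0 h
    · rcases mul_eq_zero.mp e2' with h' | h'
      · exact hne1 h'
      · linarith
  · have hpos1 : 0 < v (j+1) := hsame.mp hpos
    have e1 : 0 ≤ v j * (1 - r) := mul_nonneg hpos.le (by linarith)
    have e2 : 0 ≤ v (j+1) * r := mul_nonneg hpos1.le hr0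
    have e1' : v j * (1 - r) = 0 := le_antisymm (by linarith) e1
    have e2' : v (j+1) * r = 0 := by linarith
    rcases mul_eq_zero.mp e1' with h | h
    · exact hne0 h
    · rcases mul_eq_zero.mp e2' with h' | h'
      · exact hne1 h'
      · linarith

lemma pl_flip_zero (ts : ℕ → ℝ) (hts : StrictMono ts) (N : ℕ) (v : ℕ → ℝ) (j : ℕ) (hj : j < N)
    (hflip : ¬((0 < v j) ↔ (0 < v (j+1)))) (hne0 : v j ≠ 0) (hne1 : v (j+1) ≠ 0) :
    ∃ z : ℝ, ts j < z ∧ z < ts (j+1) ∧ pl ts N v z = 0 ∧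
      (∀ y : ℝ, ts j ≤ y → y ≤ ts (j+1) → pl ts N v y = 0 → y = z) := by
  have hd : (0:ℝ) < ts (j+1) - ts j := sub_pos.mpr (hts (Nat.lt_succ_self j))
  have hvv : v j - v (j+1) ≠ 0 := by
    intro h
    exact hflip (by rw [show v j = v (j+1) by linarith])
  have hopp : (0 < v j ∧ v (j+1) < 0) ∨ (v j < 0 ∧ 0 < v (j+1)) := by
    rcases lt_or_gt_of_ne hne0 with h0 | h0 <;> rcases lt_or_gt_of_ne hne1 with h1 | h1
    · exact absurd (iff_of_false h0.not_gt h1.not_gt) hflip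
    · exact Or.inr ⟨h0, h1⟩
    · exact Or.inl ⟨h0, h1⟩
    · exact absurd (iff_of_true h0 h1) hflip
  set ρ := v j / (v j - v (j+1)) with hρ
  have hρ0 : 0 < ρ := by
    rcases hopp with ⟨ha, hb⟩ | ⟨ha, hb⟩
    · exact div_pos ha (by linarith)
    · exact div_pos_of_neg_of_neg ha (by linarith)
  have hρ1 : ρ < 1 := by
    rcases hopp with ⟨ha, hb⟩ | ⟨ha, hb⟩
    · rw [hρ, div_lt_one (by linarith)]; linarith
    · rw [hρ, div_lt_one_of_neg (by linarith)]; linarith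
  set z := ts j + (ts (j+1) - ts j) * ρ with hzdef
  have hb1 : ts j < z := by nlinarith
  have hb2 : z < ts (j+1) := by nlinarith
  have hz0 : pl ts N v z = 0 := by
    rw [pl_eval ts hts N v j hj z hb1.le hb2.le, hzdef, hρ]
    field_simp
    ring
  refine ⟨z, hb1, hb2, hz0, ?_⟩
  intro y hy1 hy2 hy0
  rw [pl_eval ts hts N v j hj y hy1 hy2] at hy0
  rw [pl_eval ts hts N v j hj z hb1.le hb2.le] at hz0
  have hkey : (v (j+1) - v j) / (ts (j+1) - ts j) * (y - z) = 0 := by linear_combination hy0 - hz0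
  have hslope : (v (j+1) - v j) / (ts (j+1) - ts j) ≠ 0 :=
    div_ne_zero (fun h => hvv (by linarith)) (by linarith)
  rcases mul_eq_zero.mp hkey with h | h
  · exact absurd h hslope
  · linarith [sub_eq_zero.mp h]

lemma pl_cover (ts : ℕ → ℝ) (hts : StrictMono ts) : ∀ (N : ℕ) (x : ℝ), ts 0 ≤ x → x ≤ ts (N+1) →
    ∃ j ≤ N, ts j ≤ x ∧ x ≤ ts (j+1) := by
  intro N
  induction N with
  | zero => exact fun x h1 h2 => ⟨0, le_rfl, h1, h2⟩
  | succ m ih =>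
    intro x h1 h2
    by_cases h : x ≤ ts (m+1)
    · obtain ⟨j, hj, hj1, hj2⟩ := ih x h1 h
      exact ⟨j, hj.trans (Nat.le_succ m), hj1, hj2⟩
    · exact ⟨m+1, le_rfl, (not_le.mp h).le, h2⟩

open scoped Classical in
lemma walk_parity (s : ℕ → Prop) : ∀ M : ℕ,
    ((((Finset.range M).filter (fun k => ¬(s k ↔ s (k+1)))).card % 2 = 0) ↔ (s 0 ↔ s M)) := by
  intro M
  induction M with
  | zero => simp
  | succ m ih =>
    rw [Finset.range_add_one, Finset.filter_insert]
    by_cases h : ¬(s m ↔ s (m+1))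
    · rw [if_pos h, Finset.card_insert_of_notMem (by simp)]
      have hx : ((((Finset.range m).filter (fun k => ¬(s k ↔ s (k+1)))).card + 1) % 2 = 0)
          ↔ ¬((((Finset.range m).filter (fun k => ¬(s k ↔ s (k+1)))).card) % 2 = 0) := by omega
      rw [hx, ih]
      tauto
    · rw [if_neg h, ih]
      tauto

lemma walk_const (s : ℕ → Prop) (M : ℕ) (h : ∀ k < M, (s k ↔ s (k+1))) :
    ∀ k, k ≤ M → (s k ↔ s 0) := by
  intro k
  induction k with
  | zero => simp
  | succ m ih =>
    intro hm
    have h1 : m < M := Nat.lt_of_succ_le hm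
    exact ((h m h1).symm).trans (ih (Nat.le_of_lt h1))

lemma pl_zero_empty (ts : ℕ → ℝ) (hts : StrictMono ts) (n : ℕ) (D : ℕ → ℝ)
    (hD : ∀ k ≤ n, D k ≠ 0)
    (hnoflip : ∀ k < n, ((0 < D k) ↔ (0 < D (k+1)))) :
    {x : ℝ | pl ts n D x = 0} = ∅ := by
  ext x
  simp only [Set.mem_setOf_eq, Set.mem_empty_iff_false, iff_false]
  intro hx
  rcases le_or_gt x (ts 0) with h | h
  · rw [pl_left ts hts n D x h] at hx
    exact hD 0 (Nat.zero_le n) hx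
  rcases le_or_gt (ts n) x with h' | h'
  · rw [pl_right ts hts n D x h'] at hx
    exact hD n le_rfl hx
  rcases Nat.eq_zero_or_pos n with rfl | hn
  · exact absurd h' (not_lt.mpr h.le)
  obtain ⟨j, hj, hj1, hj2⟩ := pl_cover ts hts (n-1) x h.le
    (by rw [Nat.sub_add_cancel hn]; exact h'.le)
  have hjn : j < n := by omega
  exact pl_seg_ne ts hts n D j hjn (hnoflip j hjn)
    (hD j hjn.le) (hD (j+1) hjn) x hj1 hj2 hx

lemma pl_zero_two (ts : ℕ → ℝ) (hts : StrictMono ts) (n : ℕ) (D : ℕ → ℝ)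
    (hD : ∀ k ≤ n, D k ≠ 0) (a b : ℕ) (hab : a < b) (hbn : b < n)
    (hflip : ∀ k, k < n → ((¬((0 < D k) ↔ (0 < D (k+1)))) ↔ (k = a ∨ k = b))) :
    {x : ℝ | pl ts n D x = 0}.ncard = 2 := by
  have han : a < n := hab.trans hbn
  obtain ⟨za, hza1, hza2, hza0, hzau⟩ := pl_flip_zero ts hts n D a han
    ((hflip a han).mpr (Or.inl rfl)) (hD a han.le) (hD (a+1) han)
  obtain ⟨zb, hzb1, hzb2, hzb0, hzbu⟩ := pl_flip_zero ts hts n D b hbn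
    ((hflip b hbn).mpr (Or.inr rfl)) (hD b hbn.le) (hD (b+1) hbn)
  have hset : {x : ℝ | pl ts n D x = 0} = {za, zb} := by
    ext x
    simp only [Set.mem_setOf_eq, Set.mem_insert_iff, Set.mem_singleton_iff]
    constructor
    · intro hx
      rcases le_or_gt x (ts 0) with h | h
      · rw [pl_left ts hts n D x h] at hx
        exact absurd hx (hD 0 (Nat.zero_le n))
      rcases le_or_gt (ts n) x with h' | h'
      · rw [pl_right ts hts n D x h'] at hx
        exact absurd hx (hD n le_rfl)
      have hn : 1 ≤ n := Nat.one_le_iff_ne_zero.mpr (by omega)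
      obtain ⟨j, hj, hj1, hj2⟩ := pl_cover ts hts (n-1) x h.le
        (by rw [Nat.sub_add_cancel hn]; exact h'.le)
      have hjn : j < n := by omega
      by_cases hf : ¬((0 < D j) ↔ (0 < D (j+1)))
      · rcases (hflip j hjn).mp hf with rfl | rfl
        · exact Or.inl (hzau x hj1 hj2 hx)
        · exact Or.inr (hzbu x hj1 hj2 hx)
      · exact absurd hx (pl_seg_ne ts hts n D j hjn (not_not.mp hf) (hD j hjn.le) (hD (j+1) hjn) x hj1 hj2)
    · rintro (rfl | rfl)
      · exact hza0
      · exact hzb0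
  rw [hset]
  exact Set.ncard_pair (by
    have : za < zb := lt_of_lt_of_le hza2 ((hts.monotone (Nat.succ_le_of_lt hab)).trans hzb1.le)
    exact this.ne)

open scoped Classical in
lemma flips_card_le (f g : ℝ → ℝ) (hf : Continuous f) (hg : Continuous g)
    (hzfin : {x : ℝ | f x = g x}.Finite) (hz2 : {x : ℝ | f x = g x}.ncard ≤ 2)
    (n : ℕ) (ζ : ℕ → ℝ) (hζm : ∀ j j', j < j' → j' < n → ζ j < ζ j')
    (D : ℕ → ℝ) (hs : ∀ k < n, ((0 < D k) ↔ 0 < f (ζ k) - g (ζ k)))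
    (hne : ∀ k < n, f (ζ k) ≠ g (ζ k)) :
    ((Finset.range (n-1)).filter (fun k => ¬((0 < D k) ↔ (0 < D (k+1))))).card ≤ 2 := by
  set P' := (Finset.range (n-1)).filter (fun k => ¬((0 < D k) ↔ (0 < D (k+1)))) with hP'
  have hc : Continuous (fun x => f x - g x) := hf.sub hg
  have hex : ∀ k ∈ P', ∃ z, ζ k < z ∧ z < ζ (k+1) ∧ f z = g z := by
    intro k hk
    rw [hP', Finset.mem_filter, Finset.mem_range] at hk
    obtain ⟨hkn, hkflip⟩ := hk
    have hk1 : k < n := by omega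
    have hk2 : k + 1 < n := by omega
    have hmono : ζ k < ζ (k+1) := hζm k (k+1) (Nat.lt_succ_self k) hk2
    have ha : f (ζ k) - g (ζ k) ≠ 0 := sub_ne_zero.mpr (hne k hk1)
    have hb : f (ζ (k+1)) - g (ζ (k+1)) ≠ 0 := sub_ne_zero.mpr (hne (k+1) hk2)
    have hiff : ¬((0 < f (ζ k) - g (ζ k)) ↔ (0 < f (ζ (k+1)) - g (ζ (k+1)))) := by
      rw [← hs k hk1, ← hs (k+1) hk2]; exact hkflip
    rcases lt_or_gt_of_ne ha with ha' | ha' <;> rcases lt_or_gt_of_ne hb with hb' | hb'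
    · exact absurd (iff_of_false (by linarith) (by linarith)) hiff
    · obtain ⟨z, hz, hz0⟩ := intermediate_value_Ioo hmono.le (hc.continuousOn)
        (show (0:ℝ) ∈ Set.Ioo _ _ from ⟨ha', hb'⟩)
      exact ⟨z, hz.1, hz.2, by have := sub_eq_zero.mp hz0; linarith⟩
    · obtain ⟨z, hz, hz0⟩ := intermediate_value_Ioo' hmono.le (hc.continuousOn)
        (show (0:ℝ) ∈ Set.Ioo _ _ from ⟨hb', ha'⟩)
      exact ⟨z, hz.1, hz.2, by have := sub_eq_zero.mp hz0; linarith⟩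
    · exact absurd (iff_of_true (by linarith) (by linarith)) hiff
  choose! zf hzf1 hzf2 hzf3 using hex
  have hcard : P'.card ≤ hzfin.toFinset.card := by
    apply Finset.card_le_card_of_injOn zf
    · intro k hk
      rw [Set.Finite.coe_toFinset]
      exact hzf3 k hk
    · intro k hk k' hk' heq
      by_contra hne'
      have hrange : ∀ j ∈ P', j < n - 1 := fun j hj => Finset.mem_range.mp (Finset.mem_filter.mp hj).1
      rcases lt_or_gt_of_ne hne' with hlt | hlt
      · have h1 : zf k < ζ (k+1) := hzf2 k hk
        have h2 : ζ k' < zf k' := hzf1 k' hk'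
        have h3 : ζ (k+1) ≤ ζ k' := by
          rcases eq_or_lt_of_le (Nat.succ_le_of_lt hlt) with h | h
          · exact le_of_eq (congrArg ζ h)
          · exact (hζm (k+1) k' h (by have := hrange k' hk'; omega)).le
        rw [heq] at h1
        linarith
      · have h1 : zf k' < ζ (k'+1) := hzf2 k' hk'
        have h2 : ζ k < zf k := hzf1 k hk
        have h3 : ζ (k'+1) ≤ ζ k := by
          rcases eq_or_lt_of_le (Nat.succ_le_of_lt hlt) with h | h
          · exact le_of_eq (congrArg ζ h)
          · exact (hζm (k'+1) k h (by have := hrange k hk; omega)).le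
        rw [heq] at h2
        linarith
  have hfc := Set.ncard_eq_toFinset_card _ hzfin
  omega


set_option maxHeartbeats 1000000 in
/-- Any finite family `C` of pseudo-parabolas (`x`-monotone bi-infinite curves modelled
as graphs of continuous functions `ℝ → ℝ`, any two distinct ones intersecting in at
most two points) together with a finite point set `S` can be replaced by an *even*
family `C'` (any two distinct curves disjoint or crossing exactly twice) defining the
same hypergraph on `S`: the hyperedges — subsets of `S` lying on or above a curve —
are the same for `C` and `C'`. -/
theorem stmt19 (C : Set (ℝ → ℝ)) (hfin : C.Finite)
    (hcont : ∀ f ∈ C, Continuous f)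
    (hcross : ∀ f ∈ C, ∀ g ∈ C, f ≠ g →
      {x : ℝ | f x = g x}.Finite ∧ {x : ℝ | f x = g x}.ncard ≤ 2)
    (S : Set (ℝ × ℝ)) (hS : S.Finite) :
    ∃ C' : Set (ℝ → ℝ), C'.Finite ∧ (∀ f ∈ C', Continuous f) ∧
      (∀ f ∈ C', ∀ g ∈ C', f ≠ g →
        {x : ℝ | f x = g x} = ∅ ∨ {x : ℝ | f x = g x}.ncard = 2) ∧
      {A : Set (ℝ × ℝ) | ∃ f ∈ C, A = {p ∈ S | f p.1 ≤ p.2}} =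
        {A : Set (ℝ × ℝ) | ∃ f ∈ C', A = {p ∈ S | f p.1 ≤ p.2}} := by
  classical
  by_cases hSemp : S = ∅
  · subst hSemp
    refine ⟨(fun _ => fun _ : ℝ => (0:ℝ)) '' C, hfin.image _, ?_, ?_, ?_⟩
    · rintro f ⟨f₀, hf₀, rfl⟩; exact continuous_const
    · rintro f ⟨f₀, hf₀, rfl⟩ g ⟨g₀, hg₀, rfl⟩ hne; exact absurd rfl hne
    · ext A
      simp only [Set.mem_setOf_eq]
      constructor
      · rintro ⟨f, hf, rfl⟩
        exact ⟨(fun _ => (0:ℝ)), ⟨f, hf, rfl⟩, by ext p; simp⟩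
      · rintro ⟨f', ⟨f, hf, rfl⟩, rfl⟩
        exact ⟨f, hf, by ext p; simp⟩
  have hSne : S.Nonempty := Set.nonempty_iff_ne_empty.mpr hSemp
  set SA : (ℝ → ℝ) → Set (ℝ × ℝ) := fun f => {p ∈ S | f p.1 ≤ p.2} with hSAdef
  set 𝒜 : Set (Set (ℝ × ℝ)) := SA '' C with h𝒜def
  have h𝒜fin : 𝒜.Finite := hfin.image _
  have hrepex : ∀ A ∈ 𝒜, ∃ f, f ∈ C ∧ SA f = A := by
    rintro A ⟨f, hf, rfl⟩; exact ⟨f, hf, rfl⟩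
  set rep : Set (ℝ × ℝ) → (ℝ → ℝ) :=
    fun A => if h : A ∈ 𝒜 then (hrepex A h).choose else fun _ => 0 with hrepdef
  have hrepC : ∀ A, A ∈ 𝒜 → rep A ∈ C := by
    intro A hA; rw [hrepdef]; simp only [dif_pos hA]; exact (hrepex A hA).choose_spec.1
  have hrepSA : ∀ A, A ∈ 𝒜 → SA (rep A) = A := by
    intro A hA; rw [hrepdef]; simp only [dif_pos hA]; exact (hrepex A hA).choose_spec.2
  -- the columns
  have hXfin : (Prod.fst '' S).Finite := hS.image _
  set Xf : Finset ℝ := hXfin.toFinset with hXfdef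
  set n : ℕ := Xf.card with hndef
  have hn1 : 1 ≤ n := by
    rw [hndef]
    refine Finset.card_pos.mpr ?_
    obtain ⟨p, hp⟩ := hSne
    exact ⟨p.1, by rw [hXfdef, Set.Finite.mem_toFinset]; exact ⟨p, hp, rfl⟩⟩
  set e : Fin n ≃o {x : ℝ // x ∈ Xf} := Xf.orderIsoOfFin hndef.symm with hedef
  set ts : ℕ → ℝ := fun k =>
    if h : k < n then (e ⟨k, h⟩ : ℝ) else (e ⟨n-1, by omega⟩ : ℝ) + (k - n + 1 : ℕ) with htsdef
  have htsn : ∀ k, (h : k < n) → ts k = (e ⟨k, h⟩ : ℝ) := by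
    intro k h; rw [htsdef]; simp only [dif_pos h]
  have htsm : StrictMono ts := by
    intro i j hij
    rcases lt_or_ge j n with hj | hj
    · have hi : i < n := hij.trans hj
      rw [htsn i hi, htsn j hj]
      exact Subtype.coe_lt_coe.mpr (e.strictMono (by exact hij))
    · rcases lt_or_ge i n with hi | hi
      · rw [htsn i hi, htsdef]
        simp only [dif_neg (not_lt.mpr hj)]
        have h1 : (e ⟨i, hi⟩ : ℝ) ≤ (e ⟨n-1, by omega⟩ : ℝ) :=
          Subtype.coe_le_coe.mpr (e.monotone (by simp [Fin.le_def]; omega))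
        have h2 : (1:ℝ) ≤ (j - n + 1 : ℕ) := by
          have : 1 ≤ j - n + 1 := by omega
          exact_mod_cast this
        linarith
      · rw [htsdef]
        simp only [dif_neg (not_lt.mpr hj), dif_neg (not_lt.mpr hi)]
        have : (i - n + 1 : ℕ) < (j - n + 1 : ℕ) := by omega
        have := (Nat.cast_lt (α := ℝ)).mpr this
        linarith
  have htsX : ∀ p ∈ S, ∃ k, k < n ∧ ts k = p.1 := by
    intro p hp
    have hmem : p.1 ∈ Xf := by rw [hXfdef, Set.Finite.mem_toFinset]; exact ⟨p, hp, rfl⟩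
    set i : Fin n := e.symm ⟨p.1, hmem⟩ with hidef
    refine ⟨i.1, i.2, ?_⟩
    rw [htsn i.1 i.2]
    have : e ⟨i.1, i.2⟩ = e i := by congr
    rw [this, hidef, OrderIso.apply_symm_apply]
  -- column values
  set colY : ℕ → Finset ℝ :=
    fun k => (hS.toFinset.filter (fun p => p.1 = ts k)).image Prod.snd with hcolYdef
  have hcolYmem : ∀ k y, y ∈ colY k ↔ ∃ p ∈ S, p.1 = ts k ∧ p.2 = y := by
    intro k y
    rw [hcolYdef]
    simp only [Finset.mem_image, Finset.mem_filter, Set.Finite.mem_toFinset]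
    constructor
    · rintro ⟨p, ⟨hp, hp1⟩, hp2⟩; exact ⟨p, hp, hp1, hp2⟩
    · rintro ⟨p, hp, hp1, hp2⟩; exact ⟨p, ⟨hp, hp1⟩, hp2⟩
  have hcolYne : ∀ k, k < n → (colY k).Nonempty := by
    intro k hk
    have hmem : ts k ∈ Xf := by rw [htsn k hk]; exact (e ⟨k, hk⟩).2
    rw [hXfdef, Set.Finite.mem_toFinset] at hmem
    obtain ⟨p, hp, hp1⟩ := hmem
    exact ⟨p.2, (hcolYmem k p.2).mpr ⟨p, hp, hp1, rfl⟩⟩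
  set maxc : ℕ → ℝ :=
    fun k => if h : (colY k).Nonempty then (colY k).max' h + 1 else 0 with hmaxcdef
  have hmaxc : ∀ k, k < n → ∀ y ∈ colY k, y < maxc k := by
    intro k hk y hy
    rw [hmaxcdef]
    simp only [dif_pos (hcolYne k hk)]
    have := Finset.le_max' (colY k) y hy
    linarith
  set V : ℕ → Finset ℝ := fun k => insert (maxc k) (colY k) with hVdef
  -- the gap
  set gaps : Finset ℝ := (Finset.range n).biUnion
    (fun k => ((V k ×ˢ V k).filter (fun q => q.1 < q.2)).image (fun q => q.2 - q.1)) with hgapsdef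
  have hgapsne : gaps.Nonempty := by
    obtain ⟨y, hy⟩ := hcolYne 0 hn1
    refine ⟨maxc 0 - y, ?_⟩
    rw [hgapsdef, Finset.mem_biUnion]
    refine ⟨0, Finset.mem_range.mpr hn1, ?_⟩
    rw [Finset.mem_image]
    refine ⟨(y, maxc 0), ?_, rfl⟩
    rw [Finset.mem_filter, Finset.mem_product]
    exact ⟨⟨Finset.mem_insert_of_mem hy, Finset.mem_insert_self _ _⟩, hmaxc 0 hn1 y hy⟩
  set ε : ℝ := gaps.min' hgapsne / 2 with hεdef
  have hgapspos : ∀ c ∈ gaps, 0 < c := by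
    intro c hc
    rw [hgapsdef, Finset.mem_biUnion] at hc
    obtain ⟨k, _, hc⟩ := hc
    rw [Finset.mem_image] at hc
    obtain ⟨q, hq, rfl⟩ := hc
    rw [Finset.mem_filter] at hq
    linarith [hq.2]
  have hε : 0 < ε := by
    rw [hεdef]
    linarith [hgapspos _ (gaps.min'_mem hgapsne)]
  have hgap : ∀ k, k < n → ∀ a ∈ V k, ∀ b ∈ V k, a < b → 2*ε ≤ b - a := by
    intro k hk a ha b hb hab
    have hmem : b - a ∈ gaps := by
      rw [hgapsdef, Finset.mem_biUnion]
      refine ⟨k, Finset.mem_range.mpr hk, ?_⟩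
      rw [Finset.mem_image]
      exact ⟨(a, b), by rw [Finset.mem_filter, Finset.mem_product]; exact ⟨⟨ha, hb⟩, hab⟩, rfl⟩
    have := gaps.min'_le _ hmem
    rw [hεdef]; linarith
  clear_value ε
  clear hεdef
  -- thresholds
  set τ : ℕ → Set (ℝ × ℝ) → ℝ := fun k A =>
    if h : ((colY k).filter (fun y => rep A (ts k) ≤ y)).Nonempty
    then ((colY k).filter (fun y => rep A (ts k) ≤ y)).min' h else maxc k with hτdef
  have hτV : ∀ k, k < n → ∀ A, τ k A ∈ V k := by
    intro k hk A
    rw [hτdef]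
    by_cases h : ((colY k).filter (fun y => rep A (ts k) ≤ y)).Nonempty
    · simp only [dif_pos h]
      exact Finset.mem_insert_of_mem (Finset.mem_of_mem_filter _ (Finset.min'_mem _ h))
    · simp only [dif_neg h]
      exact Finset.mem_insert_self _ _
  have hτle : ∀ k, k < n → ∀ A, ∀ y ∈ colY k, (rep A (ts k) ≤ y ↔ τ k A ≤ y) := by
    intro k hk A y hy
    rw [hτdef]
    constructor
    · intro hle
      have hymem : y ∈ (colY k).filter (fun y => rep A (ts k) ≤ y) :=
        Finset.mem_filter.mpr ⟨hy, hle⟩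
      have hne' : ((colY k).filter (fun y => rep A (ts k) ≤ y)).Nonempty := ⟨y, hymem⟩
      simp only [dif_pos hne']
      exact Finset.min'_le _ y hymem
    · intro hle
      by_cases h : ((colY k).filter (fun y => rep A (ts k) ≤ y)).Nonempty
      · simp only [dif_pos h] at hle
        have hmin := Finset.min'_mem _ h
        rw [Finset.mem_filter] at hmin
        exact hmin.2.trans hle
      · simp only [dif_neg h] at hle
        exact absurd hle (not_le.mpr (hmaxc k hk y hy))
  have hτmono : ∀ k, k < n → ∀ A B, rep A (ts k) ≤ rep B (ts k) → τ k A ≤ τ k B := by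
    intro k hk A B hAB
    have hsub : (colY k).filter (fun y => rep B (ts k) ≤ y) ⊆
        (colY k).filter (fun y => rep A (ts k) ≤ y) := by
      intro y hy
      rw [Finset.mem_filter] at hy ⊢
      exact ⟨hy.1, hAB.trans hy.2⟩
    rw [hτdef]
    by_cases hB : ((colY k).filter (fun y => rep B (ts k) ≤ y)).Nonempty
    · have hA : ((colY k).filter (fun y => rep A (ts k) ≤ y)).Nonempty := by
        obtain ⟨y, hy⟩ := hB; exact ⟨y, hsub hy⟩
      simp only [dif_pos hA, dif_pos hB]
      exact Finset.min'_le _ _ (hsub (Finset.min'_mem _ hB))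
    · simp only [dif_neg hB]
      by_cases hA : ((colY k).filter (fun y => rep A (ts k) ≤ y)).Nonempty
      · simp only [dif_pos hA]
        have hmin := Finset.min'_mem _ hA
        have := Finset.mem_of_mem_filter _ hmin
        exact (hmaxc k hk _ this).le
      · simp only [dif_neg hA]
        exact le_rfl
  -- the forbidden set of crossing points
  set Z : Set ℝ := ⋃ f ∈ C, ⋃ g ∈ C, {x | f x = g x ∧ f ≠ g} with hZdef
  have hZfin : Z.Finite := by
    rw [hZdef]
    refine Set.Finite.biUnion hfin (fun f hf => Set.Finite.biUnion hfin (fun g hg => ?_))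
    by_cases hfg : f = g
    · subst hfg
      convert Set.finite_empty using 1
      ext x; simp
    · exact Set.Finite.subset (hcross f hf g hg hfg).1 (fun x hx => hx.1)
  have hZspec : ∀ x, x ∉ Z → ∀ f ∈ C, ∀ g ∈ C, f ≠ g → f x ≠ g x := by
    intro x hx f hf g hg hfg heq
    apply hx
    rw [hZdef]
    simp only [Set.mem_iUnion]
    exact ⟨f, hf, g, hg, heq, hfg⟩
  -- sample points
  have hξex : ∀ k : ℕ, ∃ t, (if k = 0 then ts 0 - 1 else ts (k-1)) < t ∧ t < ts k ∧ t ∉ Z := by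
    intro k
    have hlb : (if k = 0 then ts 0 - 1 else ts (k-1)) < ts k := by
      by_cases hk : k = 0
      · rw [if_pos hk, hk]; linarith
      · rw [if_neg hk]; exact htsm (by omega)
    have hinf : (Set.Ioo (if k = 0 then ts 0 - 1 else ts (k-1)) (ts k) \ Z).Infinite :=
      (Set.Ioo_infinite hlb).diff hZfin
    obtain ⟨t, ht⟩ := hinf.nonempty
    exact ⟨t, ht.1.1, ht.1.2, ht.2⟩
  choose ξ hξ1 hξ2 hξ3 using hξex
  have hξprev : ∀ k, 1 ≤ k → ts (k-1) < ξ k := by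
    intro k hk
    have := hξ1 k
    rwa [if_neg (by omega : ¬ k = 0)] at this
  -- arctan bound
  have harctan : ∀ u : ℝ, |Real.arctan u| < 2 := by
    intro u
    rw [abs_lt]
    constructor
    · have := Real.neg_pi_div_two_lt_arctan u
      have hpi := Real.pi_lt_d2
      linarith
    · have := Real.arctan_lt_pi_div_two u
      have hpi := Real.pi_lt_d2
      linarith
  -- the node values
  set W : Set (ℝ × ℝ) → ℕ → ℝ := fun A k =>
    τ (if k < n then k else 0) A
      - ε * (1 - Real.arctan (rep A (ξ (if k < n then k else 0))) / 4) with hWdef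
  have hWlt : ∀ k, k < n → ∀ A, W A k = τ k A - ε * (1 - Real.arctan (rep A (ξ k)) / 4) := by
    intro k hk A
    rw [hWdef]
    simp only [if_pos hk]
  have hWcyc : ∀ A, W A n = W A 0 := by
    intro A
    rw [hWdef]
    simp
  have hWbound : ∀ k, k < n → ∀ A, τ k A - 2*ε < W A k ∧ W A k < τ k A - ε/2 := by
    intro k hk A
    rw [hWlt k hk A]
    have := harctan (rep A (ξ k))
    rw [abs_lt] at this
    constructor <;> nlinarith
  -- the curves
  set G : Set (ℝ × ℝ) → (ℝ → ℝ) := fun A => pl ts n (W A) with hGdef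
  have hmemSA : ∀ (f : ℝ → ℝ) (q : ℝ × ℝ), q ∈ SA f ↔ q ∈ S ∧ f q.1 ≤ q.2 := fun f q => Iff.rfl
  -- key hyperedge lemma
  have hkey1 : ∀ A, A ∈ 𝒜 → SA (G A) = A := by
    intro A hA
    have hArep := hrepSA A hA
    have hmemA : ∀ q : ℝ × ℝ, q ∈ A ↔ q ∈ S ∧ rep A q.1 ≤ q.2 := by
      intro q
      conv_lhs => rw [← hArep]
      exact hmemSA _ q
    refine Set.ext (fun p => ?_)
    rw [hmemSA, hmemA]
    have core : p ∈ S → (G A p.1 ≤ p.2 ↔ rep A p.1 ≤ p.2) := by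
      intro hpS
      obtain ⟨k, hk, htk⟩ := htsX p hpS
      have hval : G A p.1 = W A k := by
        rw [hGdef, ← htk]
        exact pl_node ts htsm n (W A) k hk.le
      have hy : p.2 ∈ colY k := (hcolYmem k p.2).mpr ⟨p, hpS, htk.symm, rfl⟩
      have hiff1 : rep A (ts k) ≤ p.2 ↔ τ k A ≤ p.2 := hτle k hk A p.2 hy
      have hWb := hWbound k hk A
      rw [hval, ← htk]
      constructor
      · intro hple
        by_contra hnot
        have hlt : p.2 < τ k A := by
          rcases lt_or_ge p.2 (τ k A) with h | h
          · exact h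
          · exact absurd (hiff1.mpr h) hnot
        have h2ε : 2*ε ≤ τ k A - p.2 :=
          hgap k hk p.2 (Finset.mem_insert_of_mem hy) (τ k A) (hτV k hk A) hlt
        linarith [hWb.1]
      · intro hple
        obtain ⟨hWb1, hWb2⟩ := hWb
        have h1 : τ k A ≤ p.2 := hiff1.mp hple
        calc W A k ≤ τ k A - ε/2 := hWb2.le
        _ ≤ p.2 := by linarith
    constructor
    · rintro ⟨hpS, hple⟩
      exact ⟨hpS, (core hpS).mp hple⟩
    · rintro ⟨hpS, hple⟩
      exact ⟨hpS, (core hpS).mpr hple⟩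
  -- key evenness lemma
  have hkey2 : ∀ A B, A ∈ 𝒜 → B ∈ 𝒜 → A ≠ B →
      ({x : ℝ | G A x = G B x} = ∅ ∨ {x : ℝ | G A x = G B x}.ncard = 2) := by
    intro A B hA hB hAB
    have hfC := hrepC A hA
    have hgC := hrepC B hB
    have hfg : rep A ≠ rep B := by
      intro h
      apply hAB
      rw [← hrepSA A hA, ← hrepSA B hB, h]
    set D : ℕ → ℝ := fun k => W A k - W B k with hDdef
    have hGD : {x : ℝ | G A x = G B x} = {x : ℝ | pl ts n D x = 0} := by
      ext x
      simp only [Set.mem_setOf_eq, hGdef]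
      have hps : pl ts n (W A) x - pl ts n (W B) x = pl ts n D x := pl_sub ts n (W A) (W B) x
      constructor
      · intro h
        rw [← hps, h, sub_self]
      · intro h
        have h2 : pl ts n (W A) x - pl ts n (W B) x = 0 := by rw [hps]; exact h
        linarith
    set ζ : ℕ → ℝ := fun k => if τ k A = τ k B then ξ k else ts k with hζdef
    have hζle : ∀ k, ζ k ≤ ts k := by
      intro k
      simp only [hζdef]
      split
      · exact (hξ2 k).le
      · exact le_rfl
    have hζmono : ∀ j j', j < j' → j' < n → ζ j < ζ j' := by
      intro j j' hjj hj'
      have h1 : ζ j ≤ ts j := hζle j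
      have h2 : ts j ≤ ts (j'-1) := htsm.monotone (by omega)
      have h3 : ts (j'-1) < ζ j' := by
        simp only [hζdef]
        split
        · exact hξprev j' (by omega)
        · exact htsm (by omega)
      linarith
    have hDval : ∀ k, k < n → D k = (τ k A - τ k B)
        + ε * (Real.arctan (rep A (ξ k)) / 4 - Real.arctan (rep B (ξ k)) / 4) := by
      intro k hk
      simp only [hDdef]
      rw [hWlt k hk A, hWlt k hk B]
      ring
    have hsgn : ∀ k, k < n →
        (D k ≠ 0 ∧ ((0 < D k) ↔ 0 < rep A (ζ k) - rep B (ζ k)) ∧ rep A (ζ k) ≠ rep B (ζ k)) := by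
      intro k hk
      have hξZ : rep A (ξ k) ≠ rep B (ξ k) := hZspec (ξ k) (hξ3 k) _ hfC _ hgC hfg
      have harcA := harctan (rep A (ξ k))
      have harcB := harctan (rep B (ξ k))
      rw [abs_lt] at harcA harcB
      rcases lt_trichotomy (τ k A) (τ k B) with hτ | hτ | hτ
      · have hζk : ζ k = ts k := by simp only [hζdef]; rw [if_neg hτ.ne]
        have hlt : rep A (ts k) < rep B (ts k) := by
          by_contra h
          exact absurd (hτmono k hk B A (not_lt.mp h)) (not_le.mpr hτ)
        have hgapτ : 2*ε ≤ τ k B - τ k A :=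
          hgap k hk (τ k A) (hτV k hk A) (τ k B) (hτV k hk B) hτ
        have hb : ε * (Real.arctan (rep A (ξ k)) / 4 - Real.arctan (rep B (ξ k)) / 4) < ε := by
          nlinarith
        have hDlt : D k < 0 := by
          rw [hDval k hk]
          linarith
        refine ⟨hDlt.ne, ?_, ?_⟩
        · rw [hζk]
          exact iff_of_false (not_lt.mpr hDlt.le) (by simp only [not_lt]; linarith)
        · rw [hζk]; exact hlt.ne
      · have hζk : ζ k = ξ k := by simp only [hζdef]; rw [if_pos hτ]
        have hD : D k = ε * (Real.arctan (rep A (ξ k)) / 4 - Real.arctan (rep B (ξ k)) / 4) := by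
          rw [hDval k hk, hτ]; ring
        have harcne : Real.arctan (rep A (ξ k)) ≠ Real.arctan (rep B (ξ k)) :=
          fun h => hξZ (Real.arctan_injective h)
        have hmono : Real.arctan (rep B (ξ k)) < Real.arctan (rep A (ξ k))
            ↔ rep B (ξ k) < rep A (ξ k) := Real.arctan_strictMono.lt_iff_lt
        refine ⟨?_, ?_, ?_⟩
        · rw [hD]
          intro h
          rcases mul_eq_zero.mp h with h' | h'
          · exact hε.ne' h'
          · exact harcne (by linarith)
        · rw [hD, hζk]
          constructor
          · intro h
            have ht : 0 < Real.arctan (rep A (ξ k)) / 4 - Real.arctan (rep B (ξ k)) / 4 := by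
              rcases mul_pos_iff.mp h with ⟨_, h2⟩ | ⟨h1, _⟩
              · exact h2
              · linarith
            have := hmono.mp (by linarith)
            linarith
          · intro h
            have := hmono.mpr (by linarith)
            exact mul_pos hε (by linarith)
        · rw [hζk]; exact hξZ
      · have hζk : ζ k = ts k := by simp only [hζdef]; rw [if_neg hτ.ne']
        have hlt : rep B (ts k) < rep A (ts k) := by
          by_contra h
          exact absurd (hτmono k hk A B (not_lt.mp h)) (not_le.mpr hτ)
        have hgapτ : 2*ε ≤ τ k A - τ k B :=
          hgap k hk (τ k B) (hτV k hk B) (τ k A) (hτV k hk A) hτ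
        have hb : -ε < ε * (Real.arctan (rep A (ξ k)) / 4 - Real.arctan (rep B (ξ k)) / 4) := by
          nlinarith
        have hDgt : 0 < D k := by
          rw [hDval k hk]
          linarith
        refine ⟨hDgt.ne', ?_, ?_⟩
        · rw [hζk]
          exact iff_of_true hDgt (by linarith)
        · rw [hζk]; exact hlt.ne'
    have hDcyc : D n = D 0 := by
      simp only [hDdef]
      rw [hWcyc A, hWcyc B]
    have hDne : ∀ k, k ≤ n → D k ≠ 0 := by
      intro k hkn
      rcases lt_or_eq_of_le hkn with hk | hk
      · exact (hsgn k hk).1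
      · rw [hk, hDcyc]
        exact (hsgn 0 hn1).1
    have hcross' := hcross (rep A) hfC (rep B) hgC hfg
    have hflipbound := flips_card_le (rep A) (rep B) (hcont _ hfC) (hcont _ hgC)
      hcross'.1 hcross'.2 n ζ hζmono D (fun k hk => (hsgn k hk).2.1) (fun k hk => (hsgn k hk).2.2)
    set P' := (Finset.range (n-1)).filter (fun k => ¬((0 < D k) ↔ (0 < D (k+1)))) with hP'def
    have hpar := walk_parity (fun k => 0 < D k) (n-1)
    rw [← hP'def] at hpar
    have hn' : (0 < D n) ↔ (0 < D 0) := by rw [hDcyc]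
    have hsa : n - 1 + 1 = n := Nat.sub_add_cancel hn1
    have hcases : P'.card = 0 ∨ P'.card = 1 ∨ P'.card = 2 := by omega
    rcases hcases with hc | hc | hc
    · left
      rw [hGD]
      apply pl_zero_empty ts htsm n D hDne
      intro k hk
      by_cases hkl : k < n - 1
      · have hnm : k ∉ P' := by
          rw [Finset.card_eq_zero.mp hc]
          exact Finset.notMem_empty k
        rw [hP'def, Finset.mem_filter] at hnm
        exact not_not.mp (fun hno => hnm ⟨Finset.mem_range.mpr hkl, hno⟩)
      · have hkeq : k = n - 1 := by omega
        have h0 := hpar.mp (by rw [hc])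
        rw [hkeq, hsa]
        exact h0.symm.trans hn'.symm
    · right
      rw [hGD]
      obtain ⟨a, ha⟩ := Finset.card_eq_one.mp hc
      have haP : a ∈ P' := by rw [ha]; exact Finset.mem_singleton_self a
      rw [hP'def] at haP
      have hamem := Finset.mem_filter.mp haP
      have han : a < n - 1 := Finset.mem_range.mp hamem.1
      have hflipa : ¬((0 < D a) ↔ (0 < D (a+1))) := hamem.2
      have hfliplast : ¬((0 < D (n-1)) ↔ (0 < D n)) := by
        have hodd : ¬(P'.card % 2 = 0) := by rw [hc]; norm_num
        intro hiff
        exact hodd (hpar.mpr ((hiff.trans hn').symm))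
      apply pl_zero_two ts htsm n D hDne a (n-1) han (by omega)
      intro k hkn
      constructor
      · intro hflip
        by_cases hkl : k < n - 1
        · left
          have hmem : k ∈ P' := by
            rw [hP'def, Finset.mem_filter]
            exact ⟨Finset.mem_range.mpr hkl, hflip⟩
          rw [ha, Finset.mem_singleton] at hmem
          exact hmem
        · right; omega
      · rintro (rfl | rfl)
        · exact hflipa
        · rw [hsa]; exact hfliplast
    · right
      rw [hGD]
      have go : ∀ a b : ℕ, a < b → P' = {a, b} → {x : ℝ | pl ts n D x = 0}.ncard = 2 := by
        intro a b hab' hP2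
        have haP : a ∈ P' := by rw [hP2]; simp
        have hbP : b ∈ P' := by rw [hP2]; simp
        rw [hP'def] at haP hbP
        have hamem := Finset.mem_filter.mp haP
        have hbmem := Finset.mem_filter.mp hbP
        have han : a < n - 1 := Finset.mem_range.mp hamem.1
        have hbn : b < n - 1 := Finset.mem_range.mp hbmem.1
        have hnolast : ((0 < D (n-1)) ↔ (0 < D n)) := by
          have heven : P'.card % 2 = 0 := by rw [hc]
          have h0 := hpar.mp heven
          exact h0.symm.trans hn'.symm
        apply pl_zero_two ts htsm n D hDne a b hab' (by omega)
        intro k hkn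
        constructor
        · intro hflip
          by_cases hkl : k < n - 1
          · have hmem : k ∈ P' := by
              rw [hP'def, Finset.mem_filter]
              exact ⟨Finset.mem_range.mpr hkl, hflip⟩
            rw [hP2] at hmem
            simpa using hmem
          · exfalso
            have hkeq : k = n - 1 := by omega
            rw [hkeq, hsa] at hflip
            exact hflip hnolast
        · rintro (rfl | rfl)
          · exact hamem.2
          · exact hbmem.2
      obtain ⟨a, b, hab, hP2⟩ := Finset.card_eq_two.mp hc
      rcases lt_or_gt_of_ne hab with hlt | hlt
      · exact go a b hlt hP2
      · exact go b a hlt (by rw [hP2]; exact Finset.pair_comm a b)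
  -- assembly
  refine ⟨G '' 𝒜, h𝒜fin.image G, ?_, ?_, ?_⟩
  · rintro f' ⟨A, hA, rfl⟩
    simp only [hGdef]
    exact pl_continuous ts n (W A)
  · rintro f' ⟨A, hA, rfl⟩ g' ⟨B, hB, rfl⟩ hne
    have hABne : A ≠ B := fun h => hne (by rw [h])
    exact hkey2 A B hA hB hABne
  · ext A'
    simp only [Set.mem_setOf_eq]
    constructor
    · rintro ⟨f0, hf0, rfl⟩
      have hmem𝒜 : SA f0 ∈ 𝒜 := ⟨f0, hf0, rfl⟩
      refine ⟨G (SA f0), ⟨SA f0, hmem𝒜, rfl⟩, ?_⟩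
      exact ((hkey1 (SA f0) hmem𝒜).symm : SA f0 = SA (G (SA f0)))
    · rintro ⟨f', ⟨A, hA, rfl⟩, rfl⟩
      have h1 : SA (G A) = A := hkey1 A hA
      obtain ⟨f0, hf0, hf0A⟩ := hA
      refine ⟨f0, hf0, ?_⟩
      show SA (G A) = SA f0
      exact h1.trans hf0A.symm
end
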